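/- arXiv:math/0410440 — 7 statements merged into one kernel-verified Lean document; each statement's English description precedes it below -/
import Mathlib

section
/- A group Γ acting by isometries on a complete CAT(1) space X has a fixed point if and only if it has an orbit of diameter < π/2... in particular: if Γ has an orbit of diameter < π/2, then Γ has a fixed point in X. -/
open scoped ENNReal RealInnerProductSpace
open Set Filter

noncomputable section

/-- A complete metric space is *CAT(1)* if any two points at distance `< π` have a
midpoint, and the spherical (curvature 1) midpoint comparison inequality holds for
triangles of perimeter `< 2π`. -/
def IsCAT1 (X : Type*) [MetricSpace X] : Prop :=
  CompleteSpace X ∧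
  (∀ x y : X, dist x y < Real.pi →
      ∃ m : X, dist x m = dist x y / 2 ∧ dist y m = dist x y / 2) ∧
  (∀ x y z m : X, dist x y < Real.pi →
      dist x m = dist x y / 2 → dist y m = dist x y / 2 →
      dist x z + dist y z + dist x y < 2 * Real.pi →
      (Real.cos (dist x z) + Real.cos (dist y z)) / 2 ≤
        Real.cos (dist z m) * Real.cos (dist x y / 2))

/-- `γ` is a (unit–speed, minimizing) geodesic on the interval `[a,b]`. -/
def IsGeodesicOn {X : Type*} [MetricSpace X] (γ : ℝ → X) (a b : ℝ) : Prop :=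
  ∀ s ∈ Set.Icc a b, ∀ t ∈ Set.Icc a b, dist (γ s) (γ t) = |s - t|

/-- A subset of a CAT(1) space is convex if any two of its points at distance `< π`
are joined by a geodesic inside the subset. -/
def IsConvexSet {X : Type*} [MetricSpace X] (C : Set X) : Prop :=
  ∀ x ∈ C, ∀ y ∈ C, dist x y < Real.pi →
    ∃ γ : ℝ → X, γ 0 = x ∧ γ (dist x y) = y ∧ IsGeodesicOn γ 0 (dist x y) ∧
      ∀ t ∈ Set.Icc 0 (dist x y), γ t ∈ C

/-- The closed convex hull of a subset: the intersection of all closed convex sets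
containing it. -/
def ClosedConvexHull {X : Type*} [MetricSpace X] (A : Set X) : Set X :=
  ⋂₀ {C : Set X | A ⊆ C ∧ IsClosed C ∧ IsConvexSet C}

/-- The (circum)radius `rad X = inf_x sup_y d(x,y)` of a metric space, as an
extended nonnegative real. -/
def eRad (X : Type*) [MetricSpace X] : ℝ≥0∞ :=
  ⨅ x : X, ⨆ y : X, edist x y

/-!
For the orbit `p g = g • x` let `f z = sup_g d(z, g x)` (`supDist p z`) and `R = inf_z f z`
(`circumradius p`). If `f z, f z' ≤ r < π/2` and `m` is the midpoint of `z z'`, the CAT(1)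
comparison inequality applied to every orbit point gives
`cos r ≤ cos (f m) * cos (d(z, z') / 2) ≤ cos R * cos (d(z, z') / 2)`. So points where `f` is close
to `R` are close to each other: minimizing sequences are Cauchy, and by completeness there is a
circumcenter, which is unique. Since `f` is invariant under the isometric action, the circumcenter
is fixed.
-/

open Bornology Metric Real Topology

lemma Real.le_arccos_of_le_cos {d a : ℝ} (hd₀ : 0 ≤ d) (hd : d ≤ π) (h : a ≤ cos d) :
    d ≤ arccos a :=
  arccos_cos hd₀ hd ▸ arccos_le_arccos h

section supDist

variable {ι X : Type*} [MetricSpace X] {p : ι → X}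

def supDist (p : ι → X) (z : X) : ℝ := ⨆ i, dist z (p i)

def circumradius (p : ι → X) : ℝ := ⨅ z, supDist p z

lemma supDist_nonneg (p : ι → X) (z : X) : 0 ≤ supDist p z :=
  Real.iSup_nonneg fun _ => dist_nonneg

lemma dist_le_supDist (hp : IsBounded (range p)) (z : X) (i : ι) : dist z (p i) ≤ supDist p z := by
  obtain ⟨r, hr⟩ := hp.subset_closedBall z
  refine le_ciSup (f := fun i => dist z (p i)) ⟨r, ?_⟩ i
  rintro _ ⟨j, rfl⟩
  simpa [dist_comm] using hr (mem_range_self j)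

lemma supDist_le {z : X} {r : ℝ} (h : ∀ i, dist z (p i) ≤ r) (hr : 0 ≤ r) : supDist p z ≤ r :=
  Real.iSup_le h hr

lemma lipschitzWith_supDist (hp : IsBounded (range p)) : LipschitzWith 1 (supDist p) :=
  LipschitzWith.of_le_add fun z z' =>
    supDist_le (fun i => (dist_triangle z z' (p i)).trans (by linarith [dist_le_supDist hp z' i]))
      (add_nonneg (supDist_nonneg p z') dist_nonneg)

lemma dist_le_supDist_add_supDist [Nonempty ι] (hp : IsBounded (range p)) (z z' : X) :
    dist z z' ≤ supDist p z + supDist p z' := by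
  obtain ⟨i⟩ := ‹Nonempty ι›
  calc dist z z' ≤ dist z (p i) + dist z' (p i) := dist_triangle_right z z' (p i)
    _ ≤ supDist p z + supDist p z' := add_le_add (dist_le_supDist hp z i) (dist_le_supDist hp z' i)

lemma bddBelow_range_supDist (p : ι → X) : BddBelow (range (supDist p)) :=
  ⟨0, by rintro _ ⟨z, rfl⟩; exact supDist_nonneg p z⟩

lemma circumradius_nonneg (p : ι → X) : 0 ≤ circumradius p :=
  Real.iInf_nonneg fun z => supDist_nonneg p z

lemma circumradius_le_supDist (p : ι → X) (z : X) : circumradius p ≤ supDist p z :=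
  ciInf_le (bddBelow_range_supDist p) z

lemma supDist_orbit_smul {Γ : Type*} [Group Γ] [MulAction Γ X] [IsIsometricSMul Γ X]
    (x z : X) (g : Γ) :
    supDist (fun h : Γ => h • x) (g • z) = supDist (fun h : Γ => h • x) z := by
  unfold supDist
  calc ⨆ h : Γ, dist (g • z) (h • x) = ⨆ h : Γ, dist z ((g⁻¹ * h) • x) := by
        congr with h
        rw [mul_smul, ← dist_smul g⁻¹, inv_smul_smul]
    _ = ⨆ h : Γ, dist z (h • x) := (Equiv.mulLeft g⁻¹).iSup_comp (g := fun h => dist z (h • x))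

end supDist

namespace IsCAT1

variable {X : Type*} [MetricSpace X]

lemma cos_le_cos_dist_midpoint_mul (hX : IsCAT1 X) {z z' y m : X} {r : ℝ} (hr : r < π / 2)
    (hzy : dist z y ≤ r) (hz'y : dist z' y ≤ r)
    (hm : dist z m = dist z z' / 2) (hm' : dist z' m = dist z z' / 2) :
    cos r ≤ cos (dist y m) * cos (dist z z' / 2) := by
  have hzz' : dist z z' ≤ 2 * r := by linarith [dist_triangle_right z z' y]
  have hcos : ∀ {d : ℝ}, 0 ≤ d → d ≤ r → cos r ≤ cos d := fun hd₀ hd =>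
    cos_le_cos_of_nonneg_of_le_pi hd₀ (by linarith [pi_pos]) hd
  calc cos r ≤ (cos (dist z y) + cos (dist z' y)) / 2 := by
        linarith [hcos dist_nonneg hzy, hcos dist_nonneg hz'y]
    _ ≤ cos (dist y m) * cos (dist z z' / 2) :=
        hX.2.2 z z' y m (by linarith [pi_pos]) hm hm' (by linarith [pi_pos])

variable {ι : Type*} [Nonempty ι] {p : ι → X}

lemma cos_le_cos_circumradius_mul (hX : IsCAT1 X) (hp : IsBounded (range p)) {z z' : X} {r : ℝ}
    (hr : r < π / 2) (hz : supDist p z ≤ r) (hz' : supDist p z' ≤ r) :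
    cos r ≤ cos (circumradius p) * cos (dist z z' / 2) := by
  have hr₀ : 0 ≤ r := (supDist_nonneg p z).trans hz
  have hzz' : dist z z' ≤ 2 * r := by linarith [dist_le_supDist_add_supDist hp z z']
  obtain ⟨m, hm, hm'⟩ := hX.2.1 z z' (by linarith [pi_pos])
  have hδ : 0 < cos (dist z z' / 2) :=
    cos_pos_of_mem_Ioo ⟨by linarith [pi_pos, dist_nonneg (x := z) (y := z')], by linarith⟩
  set A := cos r / cos (dist z z' / 2)
  have hA : ∀ i, A ≤ cos (dist (p i) m) := fun i =>
    (div_le_iff₀ hδ).2 <| hX.cos_le_cos_dist_midpoint_mul hr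
      ((dist_le_supDist hp z i).trans hz) ((dist_le_supDist hp z' i).trans hz') hm hm'
  have hA₀ : 0 ≤ A := div_nonneg (cos_nonneg_of_mem_Icc ⟨by linarith [pi_pos], hr.le⟩) hδ.le
  have hA₁ : A ≤ 1 := (hA (Classical.arbitrary ι)).trans (cos_le_one _)
  have hm_arccos : supDist p m ≤ arccos A := by
    refine supDist_le (fun i => ?_) (arccos_nonneg A)
    have hpi : dist (p i) m ≤ π := by
      linarith [dist_triangle (p i) z m, dist_comm z (p i), dist_le_supDist hp z i, pi_pos]
    rw [dist_comm]
    exact le_arccos_of_le_cos dist_nonneg hpi (hA i)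
  have hRA : A ≤ cos (circumradius p) :=
    cos_arccos (by linarith) hA₁ ▸ cos_le_cos_of_nonneg_of_le_pi (circumradius_nonneg p)
      (arccos_le_pi A) ((circumradius_le_supDist p m).trans hm_arccos)
  rwa [div_le_iff₀ hδ] at hRA

lemma dist_le_two_mul_arccos (hX : IsCAT1 X) (hp : IsBounded (range p)) {z z' : X} {r : ℝ}
    (hr : r < π / 2) (hz : supDist p z ≤ r) (hz' : supDist p z' ≤ r) :
    dist z z' ≤ 2 * arccos (cos r / cos (circumradius p)) := by
  have hR : 0 < cos (circumradius p) := cos_pos_of_mem_Ioo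
    ⟨by linarith [circumradius_nonneg p, pi_pos], by linarith [circumradius_le_supDist p z]⟩
  have hzz' : dist z z' ≤ 2 * r := by linarith [dist_le_supDist_add_supDist hp z z']
  have := le_arccos_of_le_cos (d := dist z z' / 2) (by positivity) (by linarith [pi_pos])
    ((div_le_iff₀' hR).2 (hX.cos_le_cos_circumradius_mul hp hr hz hz'))
  linarith

lemma eq_of_supDist_eq_circumradius (hX : IsCAT1 X) (hp : IsBounded (range p))
    (hR : circumradius p < π / 2) {z z' : X} (hz : supDist p z = circumradius p)
    (hz' : supDist p z' = circumradius p) : z = z' := by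
  have h := hX.dist_le_two_mul_arccos hp hR hz.le hz'.le
  rw [div_self (cos_pos_of_mem_Ioo ⟨by linarith [circumradius_nonneg p, pi_pos], hR⟩).ne',
    arccos_one, mul_zero] at h
  exact dist_le_zero.1 h

lemma cauchySeq_of_tendsto_circumradius (hX : IsCAT1 X) (hp : IsBounded (range p))
    (hR : circumradius p < π / 2) {w : ℕ → X}
    (hw : Tendsto (supDist p ∘ w) atTop (𝓝 (circumradius p))) : CauchySeq w := by
  set φ : ℝ → ℝ := fun t => 2 * arccos (cos t / cos (circumradius p))
  have hφ : Tendsto φ (𝓝 (circumradius p)) (𝓝 0) := by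
    have hcont : Continuous φ := by fun_prop
    have hR₀ : cos (circumradius p) ≠ 0 :=
      (cos_pos_of_mem_Ioo ⟨by linarith [circumradius_nonneg p, pi_pos], hR⟩).ne'
    simpa [φ, div_self hR₀] using hcont.tendsto (circumradius p)
  have hmax : Tendsto (fun n : ℕ × ℕ => max (supDist p (w n.1)) (supDist p (w n.2))) atTop
      (𝓝 (circumradius p)) := by
    rw [← prod_atTop_atTop_eq]
    simpa using (hw.comp tendsto_fst).max (hw.comp tendsto_snd)
  rw [cauchySeq_iff_tendsto_dist_atTop_0]
  refine squeeze_zero' (Eventually.of_forall fun _ => dist_nonneg) ?_ (hφ.comp hmax)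
  exact (hmax.eventually (gt_mem_nhds hR)).mono fun n hn =>
    hX.dist_le_two_mul_arccos hp hn (le_max_left _ _) (le_max_right _ _)

lemma exists_supDist_eq_circumradius (hX : IsCAT1 X) (hp : IsBounded (range p))
    (hR : circumradius p < π / 2) : ∃ z, supDist p z = circumradius p := by
  have := hX.1
  have : Nonempty X := ‹Nonempty ι›.map p
  obtain ⟨u, -, hu, hmem⟩ := exists_seq_tendsto_sInf (range_nonempty (supDist p))
    (bddBelow_range_supDist p)
  choose w hw using hmem
  have hfw : Tendsto (supDist p ∘ w) atTop (𝓝 (circumradius p)) := by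
    rw [show supDist p ∘ w = u from funext hw]
    exact hu
  obtain ⟨z, hz⟩ := cauchySeq_tendsto_of_complete (hX.cauchySeq_of_tendsto_circumradius hp hR hfw)
  exact ⟨z, tendsto_nhds_unique (((lipschitzWith_supDist hp).continuous.tendsto z).comp hz) hfw⟩

end IsCAT1

/-- A group acting by isometries on a complete CAT(1) space has a
fixed point iff it has an orbit of diameter `< π/2`. -/
theorem statement5 (X : Type*) [MetricSpace X] (hX : IsCAT1 X)
    (Γ : Type*) [Group Γ] [MulAction Γ X]
    (hiso : ∀ g : Γ, Isometry fun x : X => g • x) :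
    (∃ x : X, ∀ g : Γ, g • x = x) ↔
      ∃ x : X, ∃ c : ℝ, c < Real.pi / 2 ∧ ∀ g h : Γ, dist (g • x) (h • x) ≤ c := by
  refine ⟨fun ⟨x, hx⟩ => ⟨x, 0, by positivity, fun g h => by rw [hx g, hx h, dist_self]⟩, ?_⟩
  rintro ⟨x, c, hc, hd⟩
  have : IsIsometricSMul Γ X := ⟨hiso⟩
  set p : Γ → X := fun g => g • x
  have hp : IsBounded (range p) :=
    isBounded_closedBall.subset (range_subset_iff.2 fun g => by simpa [p] using hd g 1)
  have hR : circumradius p < π / 2 := (circumradius_le_supDist p x).trans_lt <|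
    (supDist_le (fun g => by simpa [p] using hd 1 g) (by simpa using hd 1 1)).trans_lt hc
  obtain ⟨z, hz⟩ := hX.exists_supDist_eq_circumradius hp hR
  exact ⟨z, fun g => hX.eq_of_supDist_eq_circumradius hp hR ((supDist_orbit_smul x z g).trans hz) hz⟩
end
end

section
/- Let P be the set of points of the unit sphere of the real Hilbert space ℓ² all of whose coordinates are non-negative, with the intrinsic angular metric d(x,y) = arccos⟨x,y⟩. Then rad(P) = diam(P) = π/2. -/
open scoped ENNReal RealInnerProductSpace
open Set Filter

noncomputable section

/-- The "positive orthant" of the unit sphere of the real Hilbert space `ℓ²`. -/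
def posSphere : Set (lp (fun _ : ℕ => ℝ) 2) :=
  {x | ‖x‖ = 1 ∧ ∀ i : ℕ, 0 ≤ x i}

theorem Memℓp.tendsto_norm_cofinite_zero {ι : Type*} {E : ι → Type*}
    [∀ i, NormedAddCommGroup (E i)] {p : ℝ≥0∞} {f : ∀ i, E i} (hf : Memℓp f p)
    (hp : 0 < p.toReal) : Tendsto (fun i => ‖f i‖) cofinite (nhds 0) := by
  have h := (hf.summable hp).tendsto_cofinite_zero.rpow_const (p := p.toReal⁻¹)
    (Or.inr (inv_nonneg.2 hp.le))
  rw [Real.zero_rpow (inv_ne_zero hp.ne')] at h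
  refine h.congr fun i => ?_
  rw [← Real.rpow_mul (norm_nonneg _), mul_inv_cancel₀ hp.ne', Real.rpow_one]

theorem lp.inner_nonneg_of_nonneg {ι : Type*} {x y : lp (fun _ : ι => ℝ) 2}
    (hx : ∀ i, 0 ≤ x i) (hy : ∀ i, 0 ≤ y i) : 0 ≤ ⟪x, y⟫ := by
  rw [lp.inner_eq_tsum]
  exact tsum_nonneg fun i => mul_nonneg (hy i) (hx i)

theorem single_one_mem_posSphere (n : ℕ) : lp.single 2 n (1 : ℝ) ∈ posSphere :=
  ⟨by simp [lp.norm_single (E := fun _ : ℕ => ℝ) (p := 2) (by norm_num)],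
    fun i => by by_cases h : i = n <;> simp [h]⟩

instance : Nonempty posSphere := ⟨⟨_, single_one_mem_posSphere 0⟩⟩

theorem iSup_arccos_inner_posSphere (x : posSphere) :
    ⨆ y : posSphere, Real.arccos ⟪(x : lp (fun _ : ℕ => ℝ) 2), (y : lp (fun _ : ℕ => ℝ) 2)⟫ =
      Real.pi / 2 := by
  have hbdd : BddAbove (range fun y : posSphere =>
      Real.arccos ⟪(x : lp (fun _ : ℕ => ℝ) 2), (y : lp (fun _ : ℕ => ℝ) 2)⟫) :=
    ⟨Real.pi, by rintro _ ⟨y, rfl⟩; exact Real.arccos_le_pi _⟩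
  refine le_antisymm (ciSup_le fun y => ?_) ?_
  · exact Real.arccos_le_pi_div_two.2 (lp.inner_nonneg_of_nonneg x.2.2 y.2.2)
  -- Testing against the basis vectors `eₙ` gives `arccos xₙ`, and `xₙ → 0`.
  have hcoord : Tendsto (fun n => (x : lp (fun _ : ℕ => ℝ) 2) n) atTop (nhds 0) := by
    rw [← Nat.cofinite_eq_atTop, tendsto_zero_iff_norm_tendsto_zero]
    exact (lp.memℓp _).tendsto_norm_cofinite_zero (by norm_num)
  have hlim : Tendsto (fun n => Real.arccos ((x : lp (fun _ : ℕ => ℝ) 2) n)) atTop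
      (nhds (Real.pi / 2)) := by
    simpa [Function.comp_def] using (Real.continuous_arccos.tendsto 0).comp hcoord
  refine le_of_tendsto' hlim fun n => ?_
  have h := le_ciSup hbdd ⟨_, single_one_mem_posSphere n⟩
  rwa [lp.inner_single_right, Real.inner_apply, mul_one] at h

/-- With the intrinsic angular metric `d(x,y) = arccos⟨x,y⟩`,
the set `P` of unit vectors of `ℓ²` with nonnegative coordinates satisfies
`rad P = diam P = π/2`. -/
theorem statement6 :
    (⨅ x : posSphere, ⨆ y : posSphere,
        Real.arccos ⟪(x : lp (fun _ : ℕ => ℝ) 2), (y : lp (fun _ : ℕ => ℝ) 2)⟫) =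
      Real.pi / 2 ∧
    (⨆ x : posSphere, ⨆ y : posSphere,
        Real.arccos ⟪(x : lp (fun _ : ℕ => ℝ) 2), (y : lp (fun _ : ℕ => ℝ) 2)⟫) =
      Real.pi / 2 := by
  simp only [iSup_arccos_inner_posSphere]
  exact ⟨ciInf_const, ciSup_const⟩
end
end

section
/- On the unit 2-sphere S², let x₁, x₂ be points with 0 < d(x₁,x₂) < π and let η be the minimizing geodesic from x₁ to x₂. For i = 1,2 let γ_i be a unit-speed geodesic starting at x_i meeting η orthogonally, and suppose γ₁ and γ₂ leave η on opposite sides, i.e., the angle at x₁ between the direction of γ₁ and the parallel transport along η of the direction of γ₂ exceeds π/2 (equivalently ∠_{x₁}(γ₁(ε), γ₂(ε)) > π/2 for small ε > 0). Then for all sufficiently small ε > 0, d(γ₁(ε), γ₂(ε)) > d(x₁, x₂). -/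
/-!
Unit vectors orthogonal to two independent vectors of `ℝ³` lie on a line, so the
normals `v₁, v₂` pointing to opposite sides of `η` satisfy `v₂ = -v₁`. Then
`⟪γ₁ ε, γ₂ ε⟫ = cos² ε · ⟪x₁, x₂⟫ - sin² ε`, which falls short of `⟪x₁, x₂⟫` by
`sin² ε · (1 + ⟪x₁, x₂⟫) > 0` for `0 < ε < π`, and `arccos` is decreasing.
-/

open scoped ENNReal RealInnerProductSpace
open Set Filter

noncomputable section

open Module

section

variable {E : Type*} [NormedAddCommGroup E] [InnerProductSpace ℝ E]

theorem linearIndependent_pair_of_abs_real_inner_lt {x y : E} (h : |⟪x, y⟫| < ‖x‖ * ‖y‖) :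
    LinearIndependent ℝ ![x, y] := by
  have hx : x ≠ 0 := by rintro rfl; simp at h
  refine (LinearIndependent.pair_iff' hx).2 fun a hxy => h.ne ?_
  rw [← hxy, real_inner_smul_right, norm_smul, real_inner_self_eq_norm_sq, abs_mul,
    abs_sq, Real.norm_eq_abs]
  ring

theorem mem_orthogonal_span_pair_iff {x y v : E} :
    v ∈ (Submodule.span ℝ {x, y})ᗮ ↔ ⟪v, x⟫ = 0 ∧ ⟪v, y⟫ = 0 := by
  rw [Submodule.mem_orthogonal']
  refine ⟨fun hv => ⟨hv x (Submodule.subset_span (by simp)),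
    hv y (Submodule.subset_span (by simp))⟩, fun ⟨hx, hy⟩ u hu => ?_⟩
  obtain ⟨a, b, rfl⟩ := Submodule.mem_span_pair.1 hu
  simp [inner_add_right, real_inner_smul_right, hx, hy]

theorem finrank_orthogonal_span_pair [FiniteDimensional ℝ E] {x y : E}
    (h : LinearIndependent ℝ ![x, y]) :
    finrank ℝ (Submodule.span ℝ {x, y})ᗮ = finrank ℝ E - 2 := by
  have h2 : finrank ℝ (Submodule.span ℝ {x, y}) = 2 := by
    rw [← Matrix.range_cons_cons_empty x y ![], finrank_span_eq_card h, Fintype.card_fin]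
  rw [← (Submodule.span ℝ {x, y}).finrank_add_finrank_orthogonal, h2]
  omega

theorem eq_neg_of_mem_of_finrank_eq_one {K : Submodule ℝ E} (hK : finrank ℝ K = 1) {v w : E}
    (hvK : v ∈ K) (hwK : w ∈ K) (hv : ‖v‖ = 1) (hw : ‖w‖ = 1) (hvw : ⟪v, w⟫ < 0) :
    w = -v := by
  have hv0 : (⟨v, hvK⟩ : K) ≠ 0 := by
    intro h; simp [Subtype.ext_iff] at h; simp [h] at hv
  obtain ⟨a, ha⟩ := (finrank_eq_one_iff_of_nonzero' _ hv0).1 hK ⟨w, hwK⟩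
  have hwa : w = a • v := by simpa [Subtype.ext_iff] using ha.symm
  have habs : |a| = 1 := by simpa [hwa, norm_smul, hv] using hw
  have hneg : a < 0 := by
    simpa [hwa, real_inner_smul_right, real_inner_self_eq_norm_sq, hv] using hvw
  rw [hwa, show a = -1 by rw [abs_of_neg hneg] at habs; linarith, neg_one_smul]

theorem eq_neg_of_orthogonal_pair_of_finrank_eq_three [FiniteDimensional ℝ E]
    (hE : finrank ℝ E = 3) {x y v w : E} (hxy : LinearIndependent ℝ ![x, y])
    (hv : ‖v‖ = 1) (hw : ‖w‖ = 1) (hvx : ⟪v, x⟫ = 0) (hvy : ⟪v, y⟫ = 0)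
    (hwx : ⟪w, x⟫ = 0) (hwy : ⟪w, y⟫ = 0) (hvw : ⟪v, w⟫ < 0) : w = -v := by
  have hK : finrank ℝ (Submodule.span ℝ {x, y})ᗮ = 1 := by
    rw [finrank_orthogonal_span_pair hxy, hE]
  exact eq_neg_of_mem_of_finrank_eq_one hK (mem_orthogonal_span_pair_iff.2 ⟨hvx, hvy⟩)
    (mem_orthogonal_span_pair_iff.2 ⟨hwx, hwy⟩) hv hw hvw

open Real in
theorem inner_cos_smul_add_sin_smul_neg {x y v : E} (hv : ‖v‖ = 1) (hvx : ⟪v, x⟫ = 0)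
    (hvy : ⟪v, y⟫ = 0) (t : ℝ) :
    ⟪cos t • x + sin t • v, cos t • y + sin t • -v⟫ = cos t ^ 2 * ⟪x, y⟫ - sin t ^ 2 := by
  simp only [inner_add_left, inner_add_right, real_inner_smul_left, real_inner_smul_right,
    inner_neg_right, real_inner_comm v x, hvx, hvy, real_inner_self_eq_norm_sq, hv]
  ring

open Real in
theorem arccos_lt_arccos_cos_sq_mul_sub_sin_sq {c t : ℝ} (hc : -1 < c) (hc' : c ≤ 1)
    (ht : sin t ≠ 0) : arccos c < arccos (cos t ^ 2 * c - sin t ^ 2) := by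
  have hpyth := sin_sq_add_cos_sq t
  have hsin : 0 < sin t ^ 2 := by positivity
  refine strictAntiOn_arccos ⟨?_, ?_⟩ ⟨hc.le, hc'⟩ ?_
  · nlinarith [sq_nonneg (cos t)]
  · nlinarith
  · nlinarith

end

/-- On the unit sphere `S² ⊂ ℝ³` (angular metric
`d(x,y) = arccos⟨x,y⟩`), if `γᵢ(t) = cos t • xᵢ + sin t • vᵢ` are unit-speed
geodesics starting at `x₁, x₂` (with `0 < d(x₁,x₂) < π`) meeting the geodesic
`x₁x₂` orthogonally (`vᵢ ⊥ x₁, x₂`) and leaving it on opposite sides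
(`⟨v₁,v₂⟩ < 0`), then `d(γ₁(ε), γ₂(ε)) > d(x₁,x₂)` for all small `ε > 0`. -/
theorem statement8 (x₁ x₂ v₁ v₂ : EuclideanSpace ℝ (Fin 3))
    (hx₁ : ‖x₁‖ = 1) (hx₂ : ‖x₂‖ = 1) (hv₁ : ‖v₁‖ = 1) (hv₂ : ‖v₂‖ = 1)
    (hd0 : 0 < Real.arccos ⟪x₁, x₂⟫) (hdπ : Real.arccos ⟪x₁, x₂⟫ < Real.pi)
    (h11 : ⟪v₁, x₁⟫ = 0) (h12 : ⟪v₁, x₂⟫ = 0)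
    (h21 : ⟪v₂, x₁⟫ = 0) (h22 : ⟪v₂, x₂⟫ = 0)
    (hopp : ⟪v₁, v₂⟫ < 0) :
    ∃ ε₀ : ℝ, 0 < ε₀ ∧ ∀ ε : ℝ, 0 < ε → ε < ε₀ →
      Real.arccos ⟪x₁, x₂⟫ <
        Real.arccos ⟪(Real.cos ε • x₁ + Real.sin ε • v₁ : EuclideanSpace ℝ (Fin 3)),
          (Real.cos ε • x₂ + Real.sin ε • v₂ : EuclideanSpace ℝ (Fin 3))⟫ := by
  have hc : |⟪x₁, x₂⟫| < ‖x₁‖ * ‖x₂‖ := by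
    rw [hx₁, hx₂, one_mul, abs_lt]
    exact ⟨Real.arccos_lt_pi.1 hdπ, Real.arccos_pos.1 hd0⟩
  have hv₂_eq : v₂ = -v₁ :=
    eq_neg_of_orthogonal_pair_of_finrank_eq_three finrank_euclideanSpace_fin
      (linearIndependent_pair_of_abs_real_inner_lt hc) hv₁ hv₂ h11 h12 h21 h22 hopp
  refine ⟨Real.pi, Real.pi_pos, fun ε hε hεπ => ?_⟩
  rw [hv₂_eq, inner_cos_smul_add_sin_smul_neg hv₁ h11 h12]
  exact arccos_lt_arccos_cos_sq_mul_sub_sin_sq (Real.arccos_lt_pi.1 hdπ)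
    (Real.arccos_pos.1 hd0).le (Real.sin_pos_of_pos_of_lt_pi hε hεπ).ne'
end
end

section
/- In a CAT(1) space X, if a point x is r-removable for some r > 0, then x is r'-removable for every r' > r. -/
/-!
Take a closed convex `C ⊇ S_r(x)` not containing `x`. Then `C ∪ {y | r ≤ d(x, y)}` is closed,
contains `S_{r'}(x)` and misses `x`, and it is convex: a geodesic of length `< π` between two of
its points that dips into the open ball `B(x, r)` meets `C` on both sides of the dip (where it
crosses `S_r(x)`, unless it starts or ends in `C`), and in a CAT(1) space a point lying between
two points of `C` at distance `< π` belongs to `C`, by the midpoint comparison inequality.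
Geodesics are built from midpoints by dyadic bisection, using completeness.
-/

open scoped ENNReal RealInnerProductSpace
open Set Filter

noncomputable section

open Metric Real Topology

section Chain

variable {X : Type*} [MetricSpace X] {f : ℕ → X} {Δ : ℝ} {N : ℕ}

lemma dist_le_mul_of_dist_succ_le (hstep : ∀ k < N, dist (f k) (f (k + 1)) ≤ Δ) {i j : ℕ}
    (hij : i ≤ j) (hj : j ≤ N) : dist (f i) (f j) ≤ ((j : ℝ) - i) * Δ := by
  have := dist_le_Ico_sum_of_dist_le (f := f) (d := fun _ => Δ) hij
    fun _ hk => hstep _ (by omega)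
  simpa [Nat.cast_sub hij] using this

lemma dist_eq_mul_of_dist_succ_le (hstep : ∀ k < N, dist (f k) (f (k + 1)) ≤ Δ)
    (hends : dist (f 0) (f N) = N * Δ) {i j : ℕ} (hi : i ≤ N) (hj : j ≤ N) :
    dist (f i) (f j) = |(i : ℝ) - j| * Δ := by
  wlog hij : i ≤ j generalizing i j
  · rw [dist_comm, abs_sub_comm, this hj hi (by omega)]
  have h₀ := dist_le_mul_of_dist_succ_le hstep (Nat.zero_le i) hi
  have h₁ := dist_le_mul_of_dist_succ_le hstep hij hj
  have h₂ := dist_le_mul_of_dist_succ_le hstep hj le_rfl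
  have := dist_triangle4 (f 0) (f i) (f j) (f N)
  rw [abs_of_nonpos (by simpa using hij)]
  simp only [Nat.cast_zero, sub_zero] at h₀
  linarith

end Chain

section DyadicIndex

def dyadicIndex (L : ℝ) (n : ℕ) (t : ℝ) : ℕ := ⌊t * 2 ^ n / L⌋₊

variable {L t : ℝ} (n : ℕ)

@[simp]
lemma dyadicIndex_zero (L : ℝ) : dyadicIndex L n 0 = 0 := by
  simp [dyadicIndex]

lemma dyadicIndex_self (hL : L ≠ 0) : dyadicIndex L n L = 2 ^ n := by
  rw [dyadicIndex, mul_div_cancel_left₀ _ hL]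
  exact_mod_cast Nat.floor_natCast (2 ^ n)

lemma dyadicIndex_le_two_pow (hL : 0 < L) (ht : t ≤ L) : dyadicIndex L n t ≤ 2 ^ n := by
  refine Nat.floor_le_of_le ?_
  rw [div_le_iff₀ hL]
  push_cast
  nlinarith [pow_pos (two_pos : (0 : ℝ) < 2) n]

lemma abs_dyadicIndex_mul_sub_le (hL : 0 < L) (ht : 0 ≤ t) :
    |dyadicIndex L n t * (L / 2 ^ n) - t| ≤ L / 2 ^ n := by
  have hy : 0 ≤ t * 2 ^ n / L := by positivity
  have hscale : 0 < L / 2 ^ n := by positivity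
  have hlo := mul_le_mul_of_nonneg_right (Nat.floor_le hy) hscale.le
  have hhi := mul_lt_mul_of_pos_right (Nat.lt_floor_add_one (t * 2 ^ n / L)) hscale
  have ht' : t * 2 ^ n / L * (L / 2 ^ n) = t := by field_simp
  rw [ht'] at hlo hhi
  rw [abs_le, dyadicIndex]
  constructor <;> linarith

lemma tendsto_div_two_pow (L : ℝ) : Tendsto (fun n : ℕ => L / 2 ^ n) atTop (𝓝 0) := by
  simpa [div_eq_mul_inv] using
    (tendsto_pow_atTop_nhds_zero_of_lt_one (by norm_num : (0 : ℝ) ≤ 2⁻¹) (by norm_num)).const_mul L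

lemma tendsto_dyadicIndex_mul (hL : 0 < L) (ht : 0 ≤ t) :
    Tendsto (fun n => dyadicIndex L n t * (L / 2 ^ n)) atTop (𝓝 t) := by
  rw [tendsto_iff_norm_sub_tendsto_zero]
  exact squeeze_zero (fun _ => norm_nonneg _) (fun n => abs_dyadicIndex_mul_sub_le n hL ht)
    (tendsto_div_two_pow L)

end DyadicIndex

def HasMidpointsBelow (X : Type*) [MetricSpace X] (D : ℝ) : Prop :=
  ∀ a b : X, dist a b < D → ∃ m, dist a m = dist a b / 2 ∧ dist b m = dist a b / 2

section DyadicGeodesic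

variable {X : Type*} [MetricSpace X]

open Classical in
def midpointOf (a b : X) : X :=
  if h : ∃ m, dist a m = dist a b / 2 ∧ dist b m = dist a b / 2 then h.choose else a

lemma dist_midpointOf (a b : X) (h : ∃ m, dist a m = dist a b / 2 ∧ dist b m = dist a b / 2) :
    dist a (midpointOf a b) = dist a b / 2 ∧ dist b (midpointOf a b) = dist a b / 2 := by
  rw [midpointOf, dif_pos h]
  exact h.choose_spec

/-- `dyadicPoint p q n k` is the point at parameter `k / 2 ^ n` of a geodesic from `p` to `q`
built by iterated bisection. -/
def dyadicPoint (p q : X) : ℕ → ℕ → X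
  | 0, k => if k = 0 then p else q
  | n + 1, k =>
    if k % 2 = 0 then dyadicPoint p q n (k / 2)
    else midpointOf (dyadicPoint p q n (k / 2)) (dyadicPoint p q n (k / 2 + 1))

variable {D : ℝ} (p q : X)

lemma dyadicPoint_succ_two_mul (n k : ℕ) :
    dyadicPoint p q (n + 1) (2 * k) = dyadicPoint p q n k := by
  simp [dyadicPoint]

lemma dyadicPoint_succ_two_mul_add_one (n k : ℕ) :
    dyadicPoint p q (n + 1) (2 * k + 1) =
      midpointOf (dyadicPoint p q n k) (dyadicPoint p q n (k + 1)) := by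
  simp [dyadicPoint, Nat.add_mod, show (2 * k + 1) / 2 = k by omega]

lemma dyadicPoint_add_two_pow_mul (n j k : ℕ) :
    dyadicPoint p q (n + j) (2 ^ j * k) = dyadicPoint p q n k := by
  induction j with
  | zero => simp
  | succ j ih => rw [← add_assoc, pow_succ', mul_assoc, dyadicPoint_succ_two_mul, ih]

@[simp]
lemma dyadicPoint_zero (n : ℕ) : dyadicPoint p q n 0 = p := by
  simpa [dyadicPoint] using dyadicPoint_add_two_pow_mul p q 0 n 0

@[simp]
lemma dyadicPoint_two_pow (n : ℕ) : dyadicPoint p q n (2 ^ n) = q := by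
  simpa [dyadicPoint] using dyadicPoint_add_two_pow_mul p q 0 n 1

lemma dist_dyadicPoint_succ_le (hmid : HasMidpointsBelow X D) (hpq : dist p q < D) (n : ℕ) :
    ∀ k < 2 ^ n, dist (dyadicPoint p q n k) (dyadicPoint p q n (k + 1)) ≤ dist p q / 2 ^ n := by
  induction n with
  | zero => simp [dyadicPoint]
  | succ n ih =>
    intro k hk
    have hhalf : ∀ m < 2 ^ n,
        dist (dyadicPoint p q n m) (dyadicPoint p q (n + 1) (2 * m + 1)) ≤
          dist p q / 2 ^ (n + 1) ∧
        dist (dyadicPoint p q (n + 1) (2 * m + 1)) (dyadicPoint p q n (m + 1)) ≤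
          dist p q / 2 ^ (n + 1) := by
      intro m hm
      have hstep := ih m hm
      have hlt : dist (dyadicPoint p q n m) (dyadicPoint p q n (m + 1)) < D :=
        hstep.trans_lt <| (div_le_self dist_nonneg (one_le_pow₀ one_le_two)).trans_lt hpq
      obtain ⟨h₁, h₂⟩ := dist_midpointOf _ _ (hmid _ _ hlt)
      rw [dyadicPoint_succ_two_mul_add_one, h₁, dist_comm (midpointOf _ _), h₂, pow_succ,
        ← div_div]
      exact ⟨by linarith, by linarith⟩
    obtain ⟨m, rfl | rfl⟩ := Nat.even_or_odd' k
    · rw [dyadicPoint_succ_two_mul]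
      exact (hhalf m (by omega)).1
    · rw [show 2 * m + 1 + 1 = 2 * (m + 1) by ring, dyadicPoint_succ_two_mul]
      exact (hhalf m (by omega)).2

variable {p q}

lemma dist_dyadicPoint (hmid : HasMidpointsBelow X D) (hpq : dist p q < D) (n : ℕ) {i j : ℕ}
    (hi : i ≤ 2 ^ n) (hj : j ≤ 2 ^ n) :
    dist (dyadicPoint p q n i) (dyadicPoint p q n j) = |(i : ℝ) - j| * (dist p q / 2 ^ n) := by
  refine dist_eq_mul_of_dist_succ_le (dist_dyadicPoint_succ_le p q hmid hpq n) ?_ hi hj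
  rw [dyadicPoint_zero, dyadicPoint_two_pow]
  push_cast
  field_simp

lemma dist_dyadicPoint_dyadicIndex (hmid : HasMidpointsBelow X D) (hpq : dist p q < D)
    (hp : 0 < dist p q) {s t : ℝ} (hs : s ∈ Icc 0 (dist p q)) (ht : t ∈ Icc 0 (dist p q))
    (m n : ℕ) :
    dist (dyadicPoint p q m (dyadicIndex (dist p q) m s))
        (dyadicPoint p q n (dyadicIndex (dist p q) n t)) =
      |dyadicIndex (dist p q) m s * (dist p q / 2 ^ m) -
        dyadicIndex (dist p q) n t * (dist p q / 2 ^ n)| := by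
  wlog hmn : m ≤ n generalizing s t m n
  · rw [dist_comm, abs_sub_comm, this ht hs n m (by omega)]
  obtain ⟨j, rfl⟩ := Nat.exists_eq_add_of_le hmn
  have hs' : 2 ^ j * dyadicIndex (dist p q) m s ≤ 2 ^ (m + j) := by
    rw [pow_add, mul_comm]
    exact Nat.mul_le_mul_right _ (dyadicIndex_le_two_pow m hp hs.2)
  have hscale : 0 < dist p q / 2 ^ (m + j) := by positivity
  rw [← dyadicPoint_add_two_pow_mul p q m j,
    dist_dyadicPoint hmid hpq _ hs' (dyadicIndex_le_two_pow (m + j) hp ht.2),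
    ← abs_of_pos hscale, ← abs_mul, abs_of_pos hscale]
  congr 1
  push_cast
  field_simp
  ring

theorem HasMidpointsBelow.exists_isGeodesicOn [CompleteSpace X] (hmid : HasMidpointsBelow X D)
    (hpq : dist p q < D) :
    ∃ γ : ℝ → X, γ 0 = p ∧ γ (dist p q) = q ∧ IsGeodesicOn γ 0 (dist p q) := by
  have : Nonempty X := ⟨p⟩
  rcases (dist_nonneg : 0 ≤ dist p q).eq_or_lt with hp | hp
  · refine ⟨fun _ => p, rfl, dist_eq_zero.1 hp.symm, fun s hs t ht => ?_⟩
    rw [← hp] at hs ht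
    simp [le_antisymm hs.2 hs.1, le_antisymm ht.2 ht.1]
  set L := dist p q
  set approx : ℝ → ℕ → X := fun t n => dyadicPoint p q n (dyadicIndex L n t)
  have hdist : ∀ s ∈ Icc 0 L, ∀ t ∈ Icc 0 L, ∀ m n, dist (approx s m) (approx t n) =
      |dyadicIndex L m s * (L / 2 ^ m) - dyadicIndex L n t * (L / 2 ^ n)| :=
    fun s hs t ht => dist_dyadicPoint_dyadicIndex hmid hpq hp hs ht
  have hlim : ∀ t ∈ Icc 0 L, Tendsto (approx t) atTop (𝓝 (limUnder atTop (approx t))) := by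
    intro t ht
    refine tendsto_nhds_limUnder (cauchySeq_tendsto_of_complete ?_)
    have := (tendsto_dyadicIndex_mul hp ht.1).cauchySeq
    rw [Metric.cauchySeq_iff] at this ⊢
    simpa only [hdist t ht t ht, Real.dist_eq] using this
  refine ⟨fun t => limUnder atTop (approx t), ?_, ?_, fun s hs t ht => ?_⟩
  · refine tendsto_nhds_unique (hlim 0 ⟨le_rfl, hp.le⟩) ?_
    simp [approx]
  · refine tendsto_nhds_unique (hlim L ⟨hp.le, le_rfl⟩) ?_
    simp [approx, dyadicIndex_self _ hp.ne']
  · refine tendsto_nhds_unique ((hlim s hs).dist (hlim t ht)) ?_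
    simp only [hdist s hs t ht]
    exact ((tendsto_dyadicIndex_mul hp hs.1).sub (tendsto_dyadicIndex_mul hp ht.1)).abs

end DyadicGeodesic

section CAT1

variable {X : Type*} [MetricSpace X]

lemma IsGeodesicOn.continuousOn {γ : ℝ → X} {a b : ℝ} (hγ : IsGeodesicOn γ a b) :
    ContinuousOn γ (Icc a b) :=
  (LipschitzOnWith.mk_one fun s hs t ht => by rw [hγ s hs t ht, Real.dist_eq]).continuousOn

lemma IsGeodesicOn.dist_add_dist {γ : ℝ → X} {a b : ℝ} (hγ : IsGeodesicOn γ a b)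
    {s₁ s s₂ : ℝ} (h₁ : s₁ ∈ Icc a b) (h₂ : s₂ ∈ Icc a b) (hs₁ : s₁ ≤ s) (hs₂ : s ≤ s₂) :
    dist (γ s₁) (γ s) + dist (γ s) (γ s₂) = dist (γ s₁) (γ s₂) := by
  have hs : s ∈ Icc a b := ⟨h₁.1.trans hs₁, hs₂.trans h₂.2⟩
  rw [hγ _ h₁ _ hs, hγ _ hs _ h₂, hγ _ h₁ _ h₂, abs_of_nonpos (by linarith),
    abs_of_nonpos (by linarith), abs_of_nonpos (by linarith)]
  ring

lemma exists_mem_of_continuousOn_of_dist_lt {Y : Type*} [TopologicalSpace Y]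
    [ConditionallyCompleteLinearOrder Y] [OrderTopology Y] {γ : Y → X} {S : Set Y}
    (hS : IsPreconnected S) (hγ : ContinuousOn γ S) {C : Set X} {x : X} {r : ℝ}
    (hsub : sphere x r ⊆ C) {a b : Y} (ha : a ∈ S) (hb : b ∈ S)
    (hγa : γ a ∈ C ∪ {y | r ≤ dist x y}) (hγb : dist x (γ b) < r) : ∃ s ∈ S, γ s ∈ C := by
  rcases hγa with hγa | hγa
  · exact ⟨a, ha, hγa⟩
  obtain ⟨s, hs, hsr⟩ := hS.intermediate_value hb ha
    ((continuous_const.dist continuous_id).comp_continuousOn hγ) ⟨hγb.le, hγa⟩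
  exact ⟨s, hs, hsub (by rw [mem_sphere, dist_comm]; exact hsr)⟩

namespace IsCAT1

lemma exists_isGeodesicOn (hX : IsCAT1 X) {p q : X} (hpq : dist p q < π) :
    ∃ γ : ℝ → X, γ 0 = p ∧ γ (dist p q) = q ∧ IsGeodesicOn γ 0 (dist p q) :=
  have := hX.1
  HasMidpointsBelow.exists_isGeodesicOn hX.2.1 hpq

/-- The comparison inequality, with `cos t + cos (L - t) = 2 cos (L / 2) cos (t - L / 2)`,
gives `≤`; the triangle inequality gives `≥`. -/
lemma dist_midpoint_of_dist_add_dist_eq (hX : IsCAT1 X) {a b z m : X} (hab : dist a b < π)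
    (ham : dist a m = dist a b / 2) (hbm : dist b m = dist a b / 2)
    (hz : dist a z + dist z b = dist a b) : dist z m = |dist a z - dist a b / 2| := by
  set L := dist a b
  set t := dist a z
  have hbz : dist b z = L - t := by rw [dist_comm]; linarith
  have hcomp := hX.2.2 a b z m hab ham hbm (by rw [hbz]; linarith)
  rw [hbz, Real.cos_add_cos, show (t + (L - t)) / 2 = L / 2 by ring,
    show (t - (L - t)) / 2 = t - L / 2 by ring] at hcomp
  have hcos : 0 < cos (L / 2) :=
    cos_pos_of_mem_Ioo ⟨by linarith [pi_pos, dist_nonneg (x := a) (y := b)], by linarith⟩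
  have hle : cos |t - L / 2| ≤ cos (dist z m) := by
    rw [cos_abs]
    nlinarith
  have h₁ : t ≤ L / 2 + dist z m := by linarith [dist_triangle a m z, dist_comm m z]
  have h₂ : L - t ≤ L / 2 + dist z m := by linarith [dist_triangle b m z, dist_comm m z]
  have h₃ : dist z m ≤ t + L / 2 := by linarith [dist_triangle z a m, dist_comm z a]
  have h₄ : dist z m ≤ L - t + L / 2 := by linarith [dist_triangle z b m, dist_comm z b]
  refine le_antisymm (not_lt.1 fun hlt => ?_) (abs_le.2 ⟨by linarith, by linarith⟩)
  have := cos_lt_cos_of_nonneg_of_le_pi (abs_nonneg _) (by linarith) hlt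
  linarith

lemma dist_add_dist_midpoint (hX : IsCAT1 X) {a b z m : X} (hab : dist a b < π)
    (ham : dist a m = dist a b / 2) (hbm : dist b m = dist a b / 2)
    (hz : dist a z + dist z b = dist a b) :
    dist a z + dist z m = dist a m ∨ dist m z + dist z b = dist m b := by
  rw [dist_comm m z, hX.dist_midpoint_of_dist_add_dist_eq hab ham hbm hz, dist_comm m b, ham, hbm]
  rcases le_total (dist a z) (dist a b / 2) with h | h
  · left
    rw [abs_of_nonpos (by linarith)]
    ring
  · right
    rw [abs_of_nonneg (by linarith)]
    linarith

/-- Halving the geodesic of `C` from `a` to `b` again and again, keeping a half between whose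
ends `z` lies, traps `z` within `dist a b / 2 ^ n` of `C`. -/
lemma mem_of_dist_add_dist_eq (hX : IsCAT1 X) {C : Set X} (hC : IsConvexSet C)
    (hCc : IsClosed C) {a b z : X} (ha : a ∈ C) (hb : b ∈ C) (hab : dist a b < π)
    (hz : dist a z + dist z b = dist a b) : z ∈ C := by
  obtain ⟨γ, hγ0, hγL, hγ, hγC⟩ := hC a ha b hb hab
  set L := dist a b
  have hdist : ∀ s ∈ Icc 0 L, ∀ s' ∈ Icc 0 L, s ≤ s' → dist (γ s) (γ s') = s' - s :=
    fun s hs s' hs' hss' => by rw [hγ s hs s' hs', abs_of_nonpos (by linarith)]; ring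
  have hbisect : ∀ n : ℕ, ∃ u ∈ Icc 0 L, ∃ v ∈ Icc 0 L, v - u = L / 2 ^ n ∧
      dist (γ u) z + dist z (γ v) = dist (γ u) (γ v) := by
    intro n
    induction n with
    | zero =>
      exact ⟨0, ⟨le_rfl, dist_nonneg⟩, L, ⟨dist_nonneg, le_rfl⟩, by simp, by rwa [hγ0, hγL]⟩
    | succ n ih =>
      obtain ⟨u, hu, v, hv, huv, hbtw⟩ := ih
      have hlen : 0 ≤ L / 2 ^ n := by positivity
      have hw : (u + v) / 2 ∈ Icc 0 L := ⟨by linarith [hu.1], by linarith [hv.2]⟩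
      have hhalf : L / 2 ^ (n + 1) = (v - u) / 2 := by rw [pow_succ, ← div_div, huv]
      rcases hX.dist_add_dist_midpoint (m := γ ((u + v) / 2))
          (by rw [hdist u hu v hv (by linarith)]; linarith [hv.2, hu.1])
          (by rw [hdist u hu _ hw (by linarith), hdist u hu v hv (by linarith)]; ring)
          (by rw [dist_comm, hdist _ hw v hv (by linarith), hdist u hu v hv (by linarith)]; ring)
          hbtw with h | h
      · exact ⟨u, hu, _, hw, by rw [hhalf]; ring, h⟩
      · exact ⟨_, hw, v, hv, by rw [hhalf]; ring, h⟩
  refine hCc.closure_subset_iff.2 le_rfl (Metric.mem_closure_iff.2 fun ε hε => ?_)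
  obtain ⟨n, hn⟩ := ((tendsto_div_two_pow L).eventually (gt_mem_nhds hε)).exists
  obtain ⟨u, hu, v, hv, huv, hbtw⟩ := hbisect n
  have hlen : 0 ≤ L / 2 ^ n := by positivity
  refine ⟨γ u, hγC u hu, ?_⟩
  rw [dist_comm]
  linarith [hdist u hu v hv (by linarith), dist_nonneg (x := z) (y := γ v)]

end IsCAT1

lemma IsConvexSet.union_setOf_le_dist (hX : IsCAT1 X) {C : Set X} (hC : IsConvexSet C)
    (hCc : IsClosed C) {x : X} {r : ℝ} (hsub : sphere x r ⊆ C) :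
    IsConvexSet (C ∪ {y | r ≤ dist x y}) := by
  intro p hp q hq hpq
  obtain ⟨γ, hγ0, hγL, hγ⟩ := hX.exists_isGeodesicOn hpq
  refine ⟨γ, hγ0, hγL, hγ, fun s hs => ?_⟩
  rcases le_or_gt r (dist x (γ s)) with hr | hr
  · exact Or.inr hr
  left
  obtain ⟨s₁, hs₁, hC₁⟩ := exists_mem_of_continuousOn_of_dist_lt isPreconnected_Icc
    (hγ.continuousOn.mono (Icc_subset_Icc le_rfl hs.2)) hsub (left_mem_Icc.2 hs.1)
    (right_mem_Icc.2 hs.1) (by rwa [hγ0]) hr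
  obtain ⟨s₂, hs₂, hC₂⟩ := exists_mem_of_continuousOn_of_dist_lt isPreconnected_Icc
    (hγ.continuousOn.mono (Icc_subset_Icc hs.1 le_rfl)) hsub (right_mem_Icc.2 hs.2)
    (left_mem_Icc.2 hs.2) (by rwa [hγL]) hr
  have h₁ : s₁ ∈ Icc 0 (dist p q) := ⟨hs₁.1, hs₁.2.trans hs.2⟩
  have h₂ : s₂ ∈ Icc 0 (dist p q) := ⟨hs.1.trans hs₂.1, hs₂.2⟩
  refine hX.mem_of_dist_add_dist_eq hC hCc hC₁ hC₂ ?_ (hγ.dist_add_dist h₁ h₂ hs₁.2 hs₂.1)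
  rw [hγ _ h₁ _ h₂, abs_sub_comm, abs_of_nonneg (by linarith [hs₁.2, hs₂.1])]
  linarith [h₁.1, h₂.2]

end CAT1

/-- In a CAT(1) space, an `r`-removable point is `r'`-removable
for every `r' > r`. -/
theorem statement11 (X : Type*) [MetricSpace X] (hX : IsCAT1 X) (x : X)
    (r r' : ℝ) (hr : 0 < r) (hrr' : r < r')
    (h : x ∉ ClosedConvexHull (Metric.sphere x r)) :
    x ∉ ClosedConvexHull (Metric.sphere x r') := by
  intro hx
  obtain ⟨C, hsub, hCc, hC, hxC⟩ :
      ∃ C, sphere x r ⊆ C ∧ IsClosed C ∧ IsConvexSet C ∧ x ∉ C := by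
    simpa [ClosedConvexHull] using h
  have hsub' : sphere x r' ⊆ C ∪ {y | r ≤ dist x y} := fun y hy => by
    rw [mem_sphere, dist_comm] at hy
    exact Or.inr (show r ≤ dist x y by linarith)
  have hcl : IsClosed (C ∪ {y | r ≤ dist x y}) :=
    hCc.union (isClosed_le continuous_const (continuous_const.dist continuous_id))
  rcases mem_sInter.1 hx _ ⟨hsub', hcl, hC.union_setOf_le_dist hX hCc hsub⟩ with hxC' | hxr
  · exact hxC hxC'
  · linarith [show r ≤ dist x x from hxr, dist_self x]
end
end

section
/- Let (X_i, o_i) be CAT(1) spaces and (X,o) = lim_ω (X_i, o_i) an ultralimit with respect to a non-principal ultrafilter ω. Let x = (x_i) ∈ X be such that for some fixed s > 0, each x_i is not s-removable in X_i. Then for each m ∈ X with d(m,x) ≤ π/2, there exists q ∈ X with d(q,x) = s and d(m,q) ≥ d(m,x). -/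
open scoped ENNReal RealInnerProductSpace
open Set Filter

noncomputable section

/-- The limit along the ultrafilter `ω` of a (bounded) real sequence. -/
def ωlim (ω : Ultrafilter ℕ) (f : ℕ → ℝ) : ℝ :=
  limUnder (ω : Filter ℕ) f

/-- A sequence is admissible if it stays at bounded distance from the basepoints. -/
def Admissible {X : ℕ → Type*} [∀ i, MetricSpace (X i)] (o : ∀ i, X i)
    (a : ∀ i, X i) : Prop :=
  ∃ M : ℝ, ∀ i, dist (a i) (o i) ≤ M

/-- `p : (∀ i, X i) → Y` exhibits `Y` as the ultralimit `lim_ω (X_i, o_i)`: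
every point of `Y` comes from an admissible sequence, and distances in `Y`
are the `ω`-limits of the distances of representing sequences. -/
structure IsUltralimit (ω : Ultrafilter ℕ) {X : ℕ → Type*} [∀ i, MetricSpace (X i)]
    (o : ∀ i, X i) (Y : Type*) [MetricSpace Y] (p : (∀ i, X i) → Y) : Prop where
  surj : ∀ y : Y, ∃ a : ∀ i, X i, Admissible o a ∧ p a = y
  dist_eq : ∀ a b : ∀ i, X i, Admissible o a → Admissible o b →
    dist (p a) (p b) = ωlim ω fun i => dist (a i) (b i)

open scoped Topology

/-- Dyadic midpoint iteration. -/
def auxDyad {X : Type*} (mid : X → X → X) (x y : X) : ℕ → ℕ → X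
  | 0, k => if k = 0 then x else y
  | n+1, k => if k % 2 = 0 then auxDyad mid x y n (k/2)
      else mid (auxDyad mid x y n (k/2)) (auxDyad mid x y n (k/2+1))

lemma aux_ball_convex {X : Type*} [MetricSpace X] (hX : IsCAT1 X) (c : X) (R : ℝ)
    (hR : R < Real.pi / 2) : IsConvexSet (Metric.closedBall c R) := by
  intro x hx y hy hxy
  rw [Metric.mem_closedBall] at hx hy
  have hR0 : 0 ≤ R := le_trans dist_nonneg hx
  have hπ := Real.pi_pos
  haveI : CompleteSpace X := hX.1
  haveI : Nonempty X := ⟨x⟩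
  set d := dist x y with hd
  have hd0 : 0 ≤ d := dist_nonneg
  -- total midpoint function
  have hmidE : ∀ u v : X, ∃ w : X, dist u v < Real.pi →
      dist u w = dist u v / 2 ∧ dist v w = dist u v / 2 := by
    intro u v
    by_cases h : dist u v < Real.pi
    · obtain ⟨w, hw⟩ := hX.2.1 u v h; exact ⟨w, fun _ => hw⟩
    · exact ⟨u, fun h' => absurd h' h⟩
  choose mid hmid using hmidE
  set F := auxDyad mid x y with hF
  have hpow : ∀ n : ℕ, (1:ℝ) ≤ 2 ^ n := fun n => one_le_pow₀ (by norm_num)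
  have hpow0 : ∀ n : ℕ, (0:ℝ) < 2 ^ n := fun n => by positivity
  have hlt : ∀ n : ℕ, d / 2 ^ n < Real.pi :=
    fun n => lt_of_le_of_lt (div_le_self hd0 (hpow n)) hxy
  have hF0 : ∀ n, F n 0 = x := by
    intro n; induction n with
    | zero => simp [hF, auxDyad]
    | succ n ih => simpa [hF, auxDyad] using ih
  have hFtop : ∀ n, F n (2 ^ n) = y := by
    intro n; induction n with
    | zero => simp [hF, auxDyad]
    | succ n ih =>
      have h1 : 2 ^ (n+1) = 2 * 2 ^ n := by ring
      simp only [hF, auxDyad, h1, Nat.mul_mod_right, Nat.mul_div_cancel_left _ (by norm_num : 0 < 2)]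
      simpa using ih
  -- adjacent distances
  have hadj : ∀ n k, k < 2 ^ n → dist (F n k) (F n (k+1)) = d / 2 ^ n := by
    intro n; induction n with
    | zero =>
      intro k hk
      interval_cases k
      simp [hF, auxDyad, hd]
    | succ n ih =>
      intro k hk
      have hp2 : 2 ^ (n+1) = 2 * 2 ^ n := by ring
      rcases Nat.even_or_odd k with ⟨j, hj⟩ | ⟨j, hj⟩
      · -- k = j + j
        have hjlt : j < 2 ^ n := by omega
        have h2 : k % 2 = 0 := by omega
        have h3 : k / 2 = j := by omega
        have h4 : (k+1) % 2 = 1 := by omega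
        have h5 : (k+1) / 2 = j := by omega
        have e1 : F (n+1) k = F n j := by simp [hF, auxDyad, h2, h3]
        have e2 : F (n+1) (k+1) = mid (F n j) (F n (j+1)) := by
          simp [hF, auxDyad, h4, h5]
        have hprev : dist (F n j) (F n (j+1)) = d / 2 ^ n := ih j hjlt
        have hm := (hmid (F n j) (F n (j+1)) (by rw [hprev]; exact hlt n)).1
        rw [e1, e2, hm, hprev, pow_succ]
        ring
      · -- k = 2j+1
        have hjlt : j < 2 ^ n := by omega
        have h2 : k % 2 = 1 := by omega
        have h3 : k / 2 = j := by omega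
        have h4 : (k+1) % 2 = 0 := by omega
        have h5 : (k+1) / 2 = j + 1 := by omega
        have e1 : F (n+1) k = mid (F n j) (F n (j+1)) := by
          simp [hF, auxDyad, h2, h3]
        have e2 : F (n+1) (k+1) = F n (j+1) := by simp [hF, auxDyad, h4, h5]
        have hprev : dist (F n j) (F n (j+1)) = d / 2 ^ n := ih j hjlt
        have hm := (hmid (F n j) (F n (j+1)) (by rw [hprev]; exact hlt n)).2
        rw [e1, e2, dist_comm, hm, hprev, pow_succ]
        ring
  -- chain upper bound
  have hchain : ∀ n j k, j ≤ k → k ≤ 2 ^ n →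
      dist (F n j) (F n k) ≤ ((k:ℝ) - j) * (d / 2 ^ n) := by
    intro n j k hjk hk
    induction k, hjk using Nat.le_induction with
    | base => simp
    | succ k hjk ih =>
      have hk' : k ≤ 2 ^ n := by omega
      calc dist (F n j) (F n (k+1))
          ≤ dist (F n j) (F n k) + dist (F n k) (F n (k+1)) := dist_triangle _ _ _
        _ ≤ ((k:ℝ) - j) * (d / 2 ^ n) + d / 2 ^ n := by
            have := hadj n k (by omega)
            have h2 := ih hk'
            linarith [this.le, this.ge]
        _ = (((k:ℕ):ℝ) + 1 - j) * (d / 2 ^ n) := by ring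
        _ = (((k+1:ℕ):ℝ) - j) * (d / 2 ^ n) := by push_cast; ring
  -- exact distances
  have hexact : ∀ n j k, j ≤ k → k ≤ 2 ^ n →
      dist (F n j) (F n k) = ((k:ℝ) - j) * (d / 2 ^ n) := by
    intro n j k hjk hk
    refine le_antisymm (hchain n j k hjk hk) ?_
    have h1 : dist x (F n j) ≤ (j:ℝ) * (d / 2 ^ n) := by
      have := hchain n 0 j (Nat.zero_le _) (le_trans hjk hk)
      rw [hF0 n] at this
      simpa using this
    have h2 : dist (F n k) y ≤ (((2:ℝ) ^ n) - k) * (d / 2 ^ n) := by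
      have h := hchain n k (2 ^ n) hk le_rfl
      rw [hFtop n] at h
      have hc : ((2 ^ n : ℕ) : ℝ) = (2:ℝ) ^ n := by push_cast; ring
      rw [hc] at h
      exact h
    have htri : d ≤ dist x (F n j) + dist (F n j) (F n k) + dist (F n k) y :=
      dist_triangle4 x (F n j) (F n k) y
    have hdn : ((2:ℝ) ^ n) * (d / 2 ^ n) = d := by field_simp
    nlinarith [hpow0 n]
  -- points stay in the ball
  have hball : ∀ n k, k ≤ 2 ^ n → dist (F n k) c ≤ R := by
    intro n; induction n with
    | zero =>
      intro k hk
      by_cases h : k = 0 <;> simp [hF, auxDyad, h, hx, hy]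
    | succ n ih =>
      intro k hk
      have hp2 : 2 ^ (n+1) = 2 * 2 ^ n := by ring
      rcases Nat.even_or_odd k with ⟨j, hj⟩ | ⟨j, hj⟩
      · have h2 : k % 2 = 0 := by omega
        have h3 : k / 2 = j := by omega
        have e1 : F (n+1) k = F n j := by simp [hF, auxDyad, h2, h3]
        rw [e1]; exact ih j (by omega)
      · have hjlt : j < 2 ^ n := by omega
        have h2 : k % 2 = 1 := by omega
        have h3 : k / 2 = j := by omega
        have e1 : F (n+1) k = mid (F n j) (F n (j+1)) := by
          simp [hF, auxDyad, h2, h3]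
        set u := F n j
        set v := F n (j+1)
        have huv : dist u v = d / 2 ^ n := hadj n j hjlt
        have huvπ : dist u v < Real.pi := by rw [huv]; exact hlt n
        have hw := hmid u v huvπ
        have hu : dist u c ≤ R := ih j (by omega)
        have hv : dist v c ≤ R := ih (j+1) (by omega)
        have hcomp := hX.2.2 u v c (mid u v) huvπ hw.1 hw.2 (by linarith)
        have hcosR : 0 < Real.cos R := Real.cos_pos_of_mem_Ioo ⟨by linarith, hR⟩
        have hcu : Real.cos R ≤ Real.cos (dist u c) :=
          Real.cos_le_cos_of_nonneg_of_le_pi dist_nonneg (by linarith) hu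
        have hcv : Real.cos R ≤ Real.cos (dist v c) :=
          Real.cos_le_cos_of_nonneg_of_le_pi dist_nonneg (by linarith) hv
        have hhalfle : dist u v / 2 ≤ Real.pi / 2 := by
          rw [huv]
          have := hlt n
          linarith
        have hduv : 0 ≤ dist u v := dist_nonneg
        have hhalf0 : 0 ≤ Real.cos (dist u v / 2) :=
          Real.cos_nonneg_of_mem_Icc ⟨by linarith, hhalfle⟩
        have hhalf1 : Real.cos (dist u v / 2) ≤ 1 := Real.cos_le_one _
        have hp1 : Real.cos R ≤ Real.cos (dist c (mid u v)) * Real.cos (dist u v / 2) := by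
          linarith
        have hcdw0 : 0 < Real.cos (dist c (mid u v)) := by nlinarith
        have hcw : Real.cos R ≤ Real.cos (dist c (mid u v)) := by
          nlinarith [mul_le_mul_of_nonneg_left hhalf1 hcdw0.le]
        have hwπ : dist c (mid u v) ≤ Real.pi := by
          have h6 : dist c (mid u v) ≤ dist c u + dist u (mid u v) := dist_triangle _ _ _
          have h7 : dist c u ≤ R := by rw [dist_comm]; exact hu
          have h8 : dist u (mid u v) = dist u v / 2 := hw.1
          linarith
        have hfin : dist c (mid u v) ≤ R := by
          by_contra hcon
          push_neg at hcon
          exact absurd hcw (not_le.mpr (Real.cos_lt_cos_of_nonneg_of_le_pi hR0 hwπ hcon))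
        rw [e1, dist_comm]
        exact hfin
  -- trivial case d = 0
  by_cases hdz : d = 0
  · have hxy0 : x = y := by
      have : dist x y = 0 := by rw [← hd]; exact hdz
      exact dist_eq_zero.mp this
    refine ⟨fun _ => x, rfl, hxy0, ?_, ?_⟩
    · intro s hs t ht
      have hs0 : s = 0 := le_antisymm (hdz ▸ hs.2) hs.1
      have ht0 : t = 0 := le_antisymm (hdz ▸ ht.2) ht.1
      simp [hs0, ht0]
    · intro t ht
      exact Metric.mem_closedBall.mpr hx
  have hdpos : 0 < d := lt_of_le_of_ne hd0 (Ne.symm hdz)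
  set kf : ℝ → ℕ → ℕ := fun t n => ⌊t * 2 ^ n / d⌋₊ with hkf
  set g : ℝ → ℕ → X := fun t n => F n (kf t n) with hg
  have hkfle : ∀ t, t ≤ d → ∀ n, kf t n ≤ 2 ^ n := by
    intro t htd n
    have h1 : t * 2 ^ n / d ≤ ((2 ^ n : ℕ) : ℝ) := by
      push_cast
      rw [div_le_iff₀ hdpos]
      nlinarith [hpow0 n]
    calc kf t n ≤ ⌊((2 ^ n : ℕ) : ℝ)⌋₊ := Nat.floor_le_floor h1
      _ = 2 ^ n := Nat.floor_natCast _
  have hstep : ∀ t, 0 ≤ t → t ≤ d → ∀ n, dist (g t n) (g t (n+1)) ≤ (d/2) * (1/2) ^ n := by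
    intro t ht0 htd n
    have hr0 : 0 ≤ t * 2 ^ n / d := by positivity
    have h2r : t * 2 ^ (n+1) / d = 2 * (t * 2 ^ n / d) := by ring
    have hlow : 2 * kf t n ≤ kf t (n+1) := by
      have hfl := Nat.floor_le hr0
      have : ((2 * kf t n : ℕ) : ℝ) ≤ t * 2 ^ (n+1) / d := by
        push_cast
        rw [h2r]
        simp only [hkf] at hfl ⊢
        linarith
      exact Nat.le_floor this
    have hhigh : kf t (n+1) ≤ 2 * kf t n + 1 := by
      have hfl := Nat.lt_floor_add_one (t * 2 ^ n / d)
      have hlt2 : t * 2 ^ (n+1) / d < ((2 * kf t n + 2 : ℕ) : ℝ) := by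
        push_cast
        rw [h2r]
        simp only [hkf] at hfl ⊢
        linarith
      have := (Nat.floor_lt (by rw [h2r]; positivity)).mpr hlt2
      simp only [hkf] at this ⊢
      omega
    have he : F (n+1) (2 * kf t n) = F n (kf t n) := by
      have h2 : (2 * kf t n) % 2 = 0 := by omega
      have h3 : (2 * kf t n) / 2 = kf t n := by omega
      simp [hF, auxDyad, h2, h3]
    have hgeo : d / 2 ^ (n+1) = d / 2 * (1/2) ^ n := by
      rw [div_pow, one_pow, pow_succ]
      ring
    have hcase : kf t (n+1) = 2 * kf t n ∨ kf t (n+1) = 2 * kf t n + 1 := by omega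
    rcases hcase with h | h
    · have : g t (n+1) = g t n := by
        simp only [hg, h, he]
      rw [this, dist_self]
      positivity
    · have h2k : 2 * kf t n < 2 ^ (n+1) := by
        have := hkfle t htd (n+1)
        omega
      have : dist (g t n) (g t (n+1)) = d / 2 ^ (n+1) := by
        simp only [hg, h]
        rw [← he]
        exact hadj (n+1) (2 * kf t n) h2k
      rw [this, hgeo]
  have hcauchy : ∀ t, 0 ≤ t → t ≤ d → CauchySeq (g t) := fun t ht0 htd =>
    cauchySeq_of_le_geometric (1/2) (d/2) (by norm_num) (hstep t ht0 htd)
  set γ : ℝ → X := fun t => limUnder atTop (g t) with hγ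
  have hconv : ∀ t, 0 ≤ t → t ≤ d → Tendsto (g t) atTop (𝓝 (γ t)) := by
    intro t ht0 htd
    obtain ⟨z, hz⟩ := cauchySeq_tendsto_of_complete (hcauchy t ht0 htd)
    have : γ t = z := by
      simp only [hγ]
      exact hz.limUnder_eq
    rw [this]
    exact hz
  have hd2 : Tendsto (fun n : ℕ => d / 2 ^ n) atTop (𝓝 0) := by
    have h := (tendsto_pow_atTop_nhds_zero_of_lt_one (by norm_num : (0:ℝ) ≤ 1/2)
      (by norm_num : (1:ℝ)/2 < 1)).const_mul d
    simp only [mul_zero] at h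
    have he2 : (fun n : ℕ => d / 2 ^ n) = fun n : ℕ => d * (1/2) ^ n := by
      funext n
      rw [one_div, inv_pow, div_eq_mul_inv]
    rw [he2]
    exact h
  have hkonv : ∀ t ∈ Icc (0:ℝ) d, Tendsto (fun n => ((kf t n : ℝ)) * (d / 2 ^ n)) atTop (𝓝 t) := by
    intro t ht
    have hub : ∀ n, ((kf t n : ℝ)) * (d / 2 ^ n) ≤ t := by
      intro n
      have h1 : ((kf t n : ℝ)) ≤ t * 2 ^ n / d := Nat.floor_le (by
        have := ht.1
        positivity)
      calc (kf t n : ℝ) * (d / 2 ^ n) ≤ (t * 2 ^ n / d) * (d / 2 ^ n) :=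
            mul_le_mul_of_nonneg_right h1 (le_of_lt (div_pos hdpos (hpow0 n)))
        _ = t := by field_simp
    have hlb : ∀ n, t - d / 2 ^ n ≤ ((kf t n : ℝ)) * (d / 2 ^ n) := by
      intro n
      have h1 : t * 2 ^ n / d - 1 ≤ (kf t n : ℝ) := by
        have := Nat.lt_floor_add_one (t * 2 ^ n / d)
        simp only [hkf]
        linarith
      have h2 := mul_le_mul_of_nonneg_right h1 (le_of_lt (div_pos hdpos (hpow0 n)))
      calc t - d / 2 ^ n = (t * 2 ^ n / d - 1) * (d / 2 ^ n) := by
            field_simp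
        _ ≤ _ := h2
    have hlow' : Tendsto (fun n : ℕ => t - d / 2 ^ n) atTop (𝓝 t) := by
      simpa using (tendsto_const_nhds (x := t) (f := atTop (α := ℕ))).sub hd2
    exact tendsto_of_tendsto_of_tendsto_of_le_of_le hlow' tendsto_const_nhds hlb hub
  have hkey : ∀ s ∈ Icc (0:ℝ) d, ∀ t ∈ Icc (0:ℝ) d, s ≤ t → dist (γ s) (γ t) = t - s := by
    intro s hs t ht hst
    have h1 : Tendsto (fun n => dist (g s n) (g t n)) atTop (𝓝 (dist (γ s) (γ t))) :=
      (hconv s hs.1 hs.2).dist (hconv t ht.1 ht.2)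
    have h2 : ∀ n, dist (g s n) (g t n) = (kf t n : ℝ) * (d / 2 ^ n) - (kf s n : ℝ) * (d / 2 ^ n) := by
      intro n
      have hmono : kf s n ≤ kf t n := Nat.floor_le_floor (by gcongr)
      have hx2 := hexact n (kf s n) (kf t n) hmono (hkfle t ht.2 n)
      simp only [hg]
      rw [hx2]
      ring
    have h3 : Tendsto (fun n => dist (g s n) (g t n)) atTop (𝓝 (t - s)) := by
      have he3 : (fun n => dist (g s n) (g t n)) =
          fun n => (kf t n : ℝ) * (d / 2 ^ n) - (kf s n : ℝ) * (d / 2 ^ n) := funext h2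
      rw [he3]
      exact (hkonv t ht).sub (hkonv s hs)
    exact tendsto_nhds_unique h1 h3
  refine ⟨γ, ?_, ?_, ?_, ?_⟩
  · have hz : g 0 = fun _ => x := by
      funext n
      simp [hg, hkf, hF0]
    simp only [hγ, hz]
    exact Filter.Tendsto.limUnder_eq tendsto_const_nhds
  · have hz : g d = fun _ => y := by
      funext n
      have hq : d * 2 ^ n / d = ((2 ^ n : ℕ) : ℝ) := by
        push_cast
        field_simp
      simp only [hg, hkf]
      rw [hq, Nat.floor_natCast, hFtop]
    simp only [hγ, hz]
    exact Filter.Tendsto.limUnder_eq tendsto_const_nhds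
  · intro s hs t ht
    rcases le_total s t with h | h
    · rw [hkey s hs t ht h, abs_sub_comm, abs_of_nonneg (by linarith)]
    · rw [dist_comm, hkey t ht s hs h, abs_of_nonneg (by linarith)]
  · intro t ht
    refine Metric.isClosed_closedBall.mem_of_tendsto (hconv t ht.1 ht.2)
      (Filter.Eventually.of_forall fun n => ?_)
    exact Metric.mem_closedBall.mpr (hball n (kf t n) (hkfle t ht.2 n))


lemma aux_step {X : Type*} [MetricSpace X] (hX : IsCAT1 X) (a b : X) (s : ℝ)
    (hrem : a ∈ ClosedConvexHull (Metric.sphere a s)) (ε : ℝ) (hε : 0 < ε) :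
    ∃ q : X, dist a q = s ∧ min (dist b a) (Real.pi / 2) - ε ≤ dist b q := by
  classical
  have hπ := Real.pi_pos
  have hne : (Metric.sphere a s).Nonempty := by
    by_contra h
    rw [Set.not_nonempty_iff_eq_empty] at h
    have hmem : a ∈ (∅ : Set X) := hrem (∅ : Set X) (Set.mem_setOf.mpr
      ⟨by rw [h], isClosed_empty, fun x hx => absurd hx (Set.notMem_empty x)⟩)
    exact Set.notMem_empty a hmem
  set T := (fun q => dist b q) '' (Metric.sphere a s) with hT
  have hTne : T.Nonempty := hne.image _
  have hbdd : BddAbove T := by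
    refine ⟨dist b a + s, ?_⟩
    rintro r ⟨q, hq, rfl⟩
    have hqa : dist q a = s := Metric.mem_sphere.mp hq
    calc dist b q ≤ dist b a + dist a q := dist_triangle _ _ _
      _ = dist b a + s := by rw [dist_comm a q, hqa]
  set R := sSup T with hRdef
  have hRε : R - ε < R := by linarith
  obtain ⟨r, ⟨q, hq, rfl⟩, hr⟩ := exists_lt_of_lt_csSup hTne hRε
  have hqa : dist q a = s := Metric.mem_sphere.mp hq
  refine ⟨q, by rw [dist_comm]; exact hqa, ?_⟩
  rcases le_or_gt (Real.pi / 2) R with hcase | hcase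
  · have : min (dist b a) (Real.pi / 2) ≤ R := le_trans (min_le_right _ _) hcase
    linarith
  · -- R < π/2 : the closed ball of radius R is closed and convex and contains the sphere
    have hsub : Metric.sphere a s ⊆ Metric.closedBall b R := by
      intro q' hq'
      rw [Metric.mem_closedBall, dist_comm]
      exact le_csSup hbdd ⟨q', hq', rfl⟩
    have hmem : a ∈ Metric.closedBall b R :=
      hrem (Metric.closedBall b R)
        (Set.mem_setOf.mpr ⟨hsub, Metric.isClosed_closedBall, aux_ball_convex hX b R hcase⟩)
    rw [Metric.mem_closedBall, dist_comm] at hmem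
    have : min (dist b a) (Real.pi / 2) ≤ R := le_trans (min_le_left _ _) hmem
    linarith

lemma aux_tendsto_ωlim (ω : Ultrafilter ℕ) (f : ℕ → ℝ) (M : ℝ) (h : ∀ i, |f i| ≤ M) :
    Tendsto f (ω : Filter ℕ) (𝓝 (ωlim ω f)) := by
  obtain ⟨x, -, hx⟩ := (isCompact_Icc (a := -M) (b := M)).ultrafilter_le_nhds (ω.map f) (by
    rw [Ultrafilter.coe_map, Filter.le_principal_iff]
    have : ∀ i, f i ∈ Set.Icc (-M) M := fun i => abs_le.mp (h i)
    exact Filter.mem_map.mpr (Filter.univ_mem' this))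
  rw [Ultrafilter.coe_map] at hx
  have hx' : Tendsto f (ω : Filter ℕ) (𝓝 x) := hx
  rw [ωlim, hx'.limUnder_eq]
  exact hx'


/-- Let `(X,o) = lim_ω (X_i,o_i)` and let `x = (x_i)` with each
`x_i` not `s`-removable in `X_i`. Then for each `m` with `d(m,x) ≤ π/2` there is
`q` with `d(q,x) = s` and `d(m,q) ≥ d(m,x)`. -/
theorem statement13 (ω : Ultrafilter ℕ) (hω : (ω : Filter ℕ) ≤ Filter.cofinite)
    (X : ℕ → Type) [∀ i, MetricSpace (X i)] (hX : ∀ i, IsCAT1 (X i))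
    (o : ∀ i, X i) (Y : Type) [MetricSpace Y] (p : (∀ i, X i) → Y)
    (hp : IsUltralimit ω o Y p)
    (s : ℝ) (hs : 0 < s)
    (a : ∀ i, X i) (ha : Admissible o a)
    (hrem : ∀ i, a i ∈ ClosedConvexHull (Metric.sphere (a i) s))
    (m : Y) (hm : dist m (p a) ≤ Real.pi / 2) :
    ∃ q : Y, dist q (p a) = s ∧ dist m (p a) ≤ dist m q := by
  obtain ⟨b, hbadm, hpb⟩ := hp.surj m
  subst hpb
  obtain ⟨Ma, hMa⟩ := id ha
  obtain ⟨Mb, hMb⟩ := id hbadm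
  choose q hq1 hq2 using fun i =>
    aux_step (hX i) (a i) (b i) s (hrem i) (1 / ((i : ℝ) + 1)) (by positivity)
  have hqadm : Admissible o q := by
    refine ⟨s + Ma, fun i => ?_⟩
    calc dist (q i) (o i) ≤ dist (q i) (a i) + dist (a i) (o i) := dist_triangle _ _ _
      _ ≤ s + Ma := add_le_add (by rw [dist_comm]; exact (hq1 i).le) (hMa i)
  refine ⟨p q, ?_, ?_⟩
  · rw [hp.dist_eq q a hqadm ha]
    have he : (fun i => dist (q i) (a i)) = fun _ => s := by
      funext i
      rw [dist_comm]
      exact hq1 i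
    rw [ωlim, he]
    exact Filter.Tendsto.limUnder_eq tendsto_const_nhds
  · have hωat : (ω : Filter ℕ) ≤ atTop := Nat.cofinite_eq_atTop ▸ hω
    have hbndba : ∀ i, |dist (b i) (a i)| ≤ Mb + Ma := fun i => by
      rw [abs_of_nonneg dist_nonneg]
      calc dist (b i) (a i) ≤ dist (b i) (o i) + dist (o i) (a i) := dist_triangle _ _ _
        _ ≤ Mb + Ma := add_le_add (hMb i) (by rw [dist_comm]; exact hMa i)
    have hbndbq : ∀ i, |dist (b i) (q i)| ≤ Mb + (s + Ma) := fun i => by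
      rw [abs_of_nonneg dist_nonneg]
      obtain ⟨Mq, hMq⟩ := id hqadm
      calc dist (b i) (q i) ≤ dist (b i) (o i) + dist (o i) (q i) := dist_triangle _ _ _
        _ ≤ Mb + (s + Ma) := add_le_add (hMb i) (by
            rw [dist_comm]
            calc dist (q i) (o i) ≤ dist (q i) (a i) + dist (a i) (o i) := dist_triangle _ _ _
              _ ≤ s + Ma := add_le_add (by rw [dist_comm]; exact (hq1 i).le) (hMa i))
    have htb : Tendsto (fun i => dist (b i) (a i)) (ω : Filter ℕ) (𝓝 (dist (p b) (p a))) := by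
      rw [hp.dist_eq b a hbadm ha]
      exact aux_tendsto_ωlim ω _ _ hbndba
    have htq : Tendsto (fun i => dist (b i) (q i)) (ω : Filter ℕ) (𝓝 (dist (p b) (p q))) := by
      rw [hp.dist_eq b q hbadm hqadm]
      exact aux_tendsto_ωlim ω _ _ hbndbq
    have hε0 : Tendsto (fun i : ℕ => 1 / ((i : ℝ) + 1)) (ω : Filter ℕ) (𝓝 0) :=
      tendsto_one_div_add_atTop_nhds_zero_nat.mono_left hωat
    have hlhs : Tendsto (fun i => min (dist (b i) (a i)) (Real.pi / 2) - 1 / ((i : ℝ) + 1))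
        (ω : Filter ℕ) (𝓝 (min (dist (p b) (p a)) (Real.pi / 2) - 0)) :=
      (htb.min tendsto_const_nhds).sub hε0
    have hle : min (dist (p b) (p a)) (Real.pi / 2) - 0 ≤ dist (p b) (p q) :=
      le_of_tendsto_of_tendsto' hlhs htq fun i => hq2 i
    rw [sub_zero, min_eq_left hm] at hle
    calc dist (p b) (p a) ≤ dist (p b) (p q) := hle
      _ = dist (p b) (p q) := rfl
end
end

section
/- Let X be a metric space of circumradius rad(X) ≤ π/2, let X^ω be its ultraproduct, and suppose x ∈ X^ω satisfies sup_{y∈X} d(x,y) = rad(X) and d(x, X) < rad(X), where X is canonically embedded in X^ω. If X^ω is CAT(1) and x has a unique nearest-point projection x' onto the closed convex set X ⊂ X^ω, then x' is a circumcenter of X, i.e., sup_{y∈X} d(x',y) ≤ rad(X). -/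
open scoped ENNReal RealInnerProductSpace
open Set Filter

noncomputable section

set_option maxHeartbeats 2000000 in
/-- Let `X` have radius `≤ π/2`, let `x ∈ X^ω` realize the radius
over the canonically embedded copy of `X` and lie at distance `< rad X` from it.
If `X^ω` is CAT(1) and `x'` is the unique nearest point of `X` to `x`, then `x'` is
a circumcenter of `X`. -/
theorem statement15 (ω : Ultrafilter ℕ) (hω : (ω : Filter ℕ) ≤ Filter.cofinite)
    (X : Type) [MetricSpace X] (x₀ : X)
    (Y : Type) [MetricSpace Y] (p : (ℕ → X) → Y)
    (hp : IsUltralimit ω (X := fun _ => X) (fun _ => x₀) Y p)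
    (hY : IsCAT1 Y)
    (hrad : eRad X ≤ ENNReal.ofReal (Real.pi / 2))
    (x : Y)
    (hx : (⨆ y : X, edist x (p fun _ => y)) = eRad X)
    (hlt : (⨅ y : X, edist x (p fun _ => y)) < eRad X)
    (x' : X)
    (hproj : edist x (p fun _ => x') = ⨅ y : X, edist x (p fun _ => y))
    (huniq : ∀ z : X,
      edist x (p fun _ => z) = (⨅ y : X, edist x (p fun _ => y)) → z = x') :
    (⨆ y : X, edist x' y) ≤ eRad X := by
    classical
  obtain ⟨hYc, hYmid, hYcmp⟩ := hY
  have hπ : (0:ℝ) < Real.pi := Real.pi_pos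
  have hadm : ∀ z : X, Admissible (fun _ : ℕ => x₀) (fun _ : ℕ => z) :=
    fun z => ⟨dist z x₀, fun _ => le_rfl⟩
  have hiso : ∀ u v : X, dist (p fun _ => u) (p fun _ => v) = dist u v := by
    intro u v
    rw [hp.dist_eq _ _ (hadm u) (hadm v)]
    exact Filter.Tendsto.limUnder_eq tendsto_const_nhds
  have hfin : eRad X ≠ ⊤ := ne_top_of_le_ne_top ENNReal.ofReal_ne_top hrad
  set R : ℝ := (eRad X).toReal with hRdef
  have hRpi : R ≤ Real.pi / 2 := by
    have h := ENNReal.toReal_mono ENNReal.ofReal_ne_top hrad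
    rwa [ENNReal.toReal_ofReal (by positivity)] at h
  have hble : ∀ y : X, dist x (p fun _ => y) ≤ R := by
    intro y
    have h1 : edist x (p fun _ => y) ≤ eRad X := by
      rw [← hx]; exact le_iSup (fun y : X => edist x (p fun _ => y)) y
    have h2 := ENNReal.toReal_mono hfin h1
    rwa [edist_dist, ENNReal.toReal_ofReal dist_nonneg] at h2
  have haR : dist x (p fun _ => x') < R := by
    have h1 : edist x (p fun _ => x') < eRad X := by rw [hproj]; exact hlt
    have h2 := (ENNReal.toReal_lt_toReal (edist_ne_top _ _) hfin).mpr h1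
    rwa [edist_dist, ENNReal.toReal_ofReal dist_nonneg] at h2
  have hainf : ∀ z : X, dist x (p fun _ => x') ≤ dist x (p fun _ => z) := by
    intro z
    have h1 : edist x (p fun _ => x') ≤ edist x (p fun _ => z) := by
      rw [hproj]; exact iInf_le (fun y : X => edist x (p fun _ => y)) z
    have h2 := ENNReal.toReal_mono (edist_ne_top _ _) h1
    rwa [edist_dist, edist_dist, ENNReal.toReal_ofReal dist_nonneg,
      ENNReal.toReal_ofReal dist_nonneg] at h2
  set a : ℝ := dist x (p fun _ => x') with hadef
  have ha0 : 0 ≤ a := dist_nonneg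
  have hR0 : 0 < R := lt_of_le_of_lt ha0 haR
  have haπ2 : a < Real.pi / 2 := lt_of_lt_of_le haR hRpi
  have hcosa : 0 < Real.cos a := Real.cos_pos_of_mem_Ioo ⟨by linarith, haπ2⟩
  set S : Set Y := Set.range (fun z : X => p fun _ => z) with hSdef
  have hCdist : ∀ w ∈ closure S, a ≤ dist x w := by
    intro w hw
    refine closure_minimal ?_
      (isClosed_le continuous_const (Continuous.dist continuous_const continuous_id)) hw
    rintro w ⟨z, rfl⟩
    exact hainf z
  -- approximate midpoints inside the set of constant sequences
  have hepsmid : ∀ u₀ v₀ : X, dist u₀ v₀ < Real.pi → ∀ ε : ℝ, 0 < ε →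
      ∃ z : X, dist u₀ z < dist u₀ v₀ / 2 + ε ∧ dist v₀ z < dist u₀ v₀ / 2 + ε := by
    intro u₀ v₀ hD ε hε
    have hDY : dist (p fun _ => u₀) (p fun _ => v₀) < Real.pi := by rw [hiso]; exact hD
    obtain ⟨m₀, hm₀u, hm₀v⟩ := hYmid _ _ hDY
    obtain ⟨s, hs, rfl⟩ := hp.surj m₀
    obtain ⟨M, hM⟩ := id hs
    have key : ∀ w₀ : X, Filter.Tendsto (fun i => dist w₀ (s i)) (ω : Filter ℕ)
        (nhds (dist (p fun _ => w₀) (p s))) := by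
      intro w₀
      have hbd : ∀ i, dist w₀ (s i) ∈ Set.Icc (0 : ℝ) (dist w₀ x₀ + M) := fun i =>
        ⟨dist_nonneg, by
          have h2 := hM i
          have h3 := dist_triangle w₀ x₀ (s i)
          rw [dist_comm x₀ (s i)] at h3
          linarith⟩
      obtain ⟨c, -, hc⟩ := isCompact_Icc.ultrafilter_le_nhds
        (ω.map fun i => dist w₀ (s i))
        (by rw [Ultrafilter.coe_map, Filter.le_principal_iff]
            exact Filter.mem_map.mpr (Filter.univ_mem' hbd))
      rw [Ultrafilter.coe_map] at hc
      have ht : Filter.Tendsto (fun i => dist w₀ (s i)) (ω : Filter ℕ) (nhds c) := hc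
      have heq : dist (p fun _ => w₀) (p s) = c := by
        rw [hp.dist_eq _ _ (hadm w₀) hs]
        exact ht.limUnder_eq
      rwa [heq]
    have hu2 : dist (p fun _ => u₀) (p s) = dist u₀ v₀ / 2 := by rw [hm₀u, hiso]
    have hv2 : dist (p fun _ => v₀) (p s) = dist u₀ v₀ / 2 := by rw [hm₀v, hiso]
    have h1 := Metric.tendsto_nhds.mp (key u₀) ε hε
    have h2 := Metric.tendsto_nhds.mp (key v₀) ε hε
    rw [hu2] at h1
    rw [hv2] at h2
    obtain ⟨i, hi1, hi2⟩ := (h1.and h2).exists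
    rw [Real.dist_eq] at hi1
    rw [Real.dist_eq] at hi2
    have hb1 := abs_lt.mp hi1
    have hb2 := abs_lt.mp hi2
    exact ⟨s i, by linarith [hb1.2], by linarith [hb2.2]⟩
  -- midpoints of points of `closure S` stay in `closure S`
  have hmidC : ∀ u v mm : Y, u ∈ closure S → v ∈ closure S → dist u v < Real.pi →
      dist u mm = dist u v / 2 → dist v mm = dist u v / 2 → mm ∈ closure S := by
    intro u v mm hu hv hdπ hm1 hm2
    rw [Metric.mem_closure_iff]
    intro ε hε
    set d : ℝ := dist u v with hddef
    have hd0 : 0 ≤ d := dist_nonneg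
    have hcos2 : 0 < Real.cos (d / 2) :=
      Real.cos_pos_of_mem_Ioo ⟨by linarith, by linarith⟩
    set δ : ℝ := min ((Real.pi - d) / 4) (Real.cos (d / 2) * ε ^ 2 / (3 * Real.pi ^ 2)) with hδdef
    have hδ0 : 0 < δ := lt_min (by linarith) (by positivity)
    have hδ1 : δ ≤ (Real.pi - d) / 4 := min_le_left _ _
    have hδ2 : 3 * δ * Real.pi ^ 2 ≤ Real.cos (d / 2) * ε ^ 2 := by
      have h := min_le_right ((Real.pi - d) / 4) (Real.cos (d / 2) * ε ^ 2 / (3 * Real.pi ^ 2))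
      rw [← hδdef] at h
      rw [le_div_iff₀ (by positivity : (0:ℝ) < 3 * Real.pi ^ 2)] at h
      linarith [h]
    obtain ⟨bu, hbuS, hbu⟩ := Metric.mem_closure_iff.mp hu δ hδ0
    obtain ⟨u₀, rfl⟩ := hbuS
    obtain ⟨bv, hbvS, hbv⟩ := Metric.mem_closure_iff.mp hv δ hδ0
    obtain ⟨v₀, rfl⟩ := hbvS
    have hDle : dist u₀ v₀ < d + 2 * δ := by
      have h3 := dist_triangle4 (p fun _ => u₀) u v (p fun _ => v₀)
      rw [hiso, dist_comm (p fun _ => u₀) u, ← hddef] at h3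
      have hbu' : dist u (p fun _ => u₀) < δ := hbu
      have hbv' : dist v (p fun _ => v₀) < δ := hbv
      linarith
    have hDpi : dist u₀ v₀ < Real.pi := by linarith
    obtain ⟨z, hz1, hz2⟩ := hepsmid u₀ v₀ hDpi δ hδ0
    have hbu' : dist u (p fun _ => u₀) < δ := hbu
    have hbv' : dist v (p fun _ => v₀) < δ := hbv
    have hupz : dist u (p fun _ => z) < d / 2 + 3 * δ := by
      have t1 := dist_triangle u (p fun _ => u₀) (p fun _ => z)
      rw [hiso] at t1
      linarith
    have hvpz : dist v (p fun _ => z) < d / 2 + 3 * δ := by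
      have t1 := dist_triangle v (p fun _ => v₀) (p fun _ => z)
      rw [hiso] at t1
      linarith
    have hperim : dist u (p fun _ => z) + dist v (p fun _ => z) + dist u v < 2 * Real.pi := by
      rw [← hddef]; linarith
    have hcmp := hYcmp u v (p fun _ => z) mm hdπ hm1 hm2 hperim
    rw [← hddef] at hcmp
    have hβπ : d / 2 + 3 * δ ≤ Real.pi := by linarith
    have hc1 : Real.cos (d / 2 + 3 * δ) ≤ Real.cos (dist u (p fun _ => z)) :=
      Real.cos_le_cos_of_nonneg_of_le_pi dist_nonneg hβπ hupz.le
    have hc2 : Real.cos (d / 2 + 3 * δ) ≤ Real.cos (dist v (p fun _ => z)) :=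
      Real.cos_le_cos_of_nonneg_of_le_pi dist_nonneg hβπ hvpz.le
    have hLip : Real.cos (d / 2) - Real.cos (d / 2 + 3 * δ) ≤ 3 * δ := by
      rw [Real.cos_sub_cos]
      have e1 : (d / 2 - (d / 2 + 3 * δ)) / 2 = -(3 * δ / 2) := by ring
      rw [e1, Real.sin_neg]
      have s1 : Real.sin (3 * δ / 2) ≤ 3 * δ / 2 := Real.sin_le (by linarith)
      have s2 : 0 ≤ Real.sin (3 * δ / 2) :=
        Real.sin_nonneg_of_nonneg_of_le_pi (by linarith) (by linarith)
      have s3 : Real.sin ((d / 2 + (d / 2 + 3 * δ)) / 2) ≤ 1 := Real.sin_le_one _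
      linarith [mul_le_of_le_one_left s2 s3, s1]
    have hmain : (1 - Real.cos (dist (p fun _ => z) mm)) * Real.cos (d / 2) ≤ 3 * δ := by
      linarith [hc1, hc2, hcmp, hLip]
    have hdzm : dist (p fun _ => z) mm ≤ Real.pi := by
      have t1 := dist_triangle (p fun _ => z) u mm
      rw [dist_comm (p fun _ => z) u] at t1
      linarith [hm1]
    have hquad : Real.cos (dist (p fun _ => z) mm) ≤
        1 - 2 / Real.pi ^ 2 * (dist (p fun _ => z) mm) ^ 2 :=
      Real.cos_le_one_sub_mul_cos_sq (by rwa [abs_of_nonneg dist_nonneg])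
    refine ⟨p fun _ => z, ⟨z, rfl⟩, ?_⟩
    rw [dist_comm]
    set w : ℝ := dist (p fun _ => z) mm with hwdef
    have hw0 : 0 ≤ w := dist_nonneg
    have ht2 : 2 / Real.pi ^ 2 * w ^ 2 ≤ 1 - Real.cos w := by linarith [hquad]
    have m1 : (2 / Real.pi ^ 2 * w ^ 2) * Real.cos (d / 2) ≤
        (1 - Real.cos w) * Real.cos (d / 2) := mul_le_mul_of_nonneg_right ht2 hcos2.le
    have m2 : (2 / Real.pi ^ 2 * w ^ 2) * Real.cos (d / 2) ≤ 3 * δ := le_trans m1 hmain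
    have m3 : (2 / Real.pi ^ 2 * w ^ 2) * Real.cos (d / 2) * Real.pi ^ 2 ≤
        3 * δ * Real.pi ^ 2 := mul_le_mul_of_nonneg_right m2 (by positivity)
    have e7 : (2 / Real.pi ^ 2 * w ^ 2) * Real.cos (d / 2) * Real.pi ^ 2 =
        2 * w ^ 2 * Real.cos (d / 2) := by field_simp
    rw [e7] at m3
    have m4 : 2 * w ^ 2 * Real.cos (d / 2) ≤ Real.cos (d / 2) * ε ^ 2 := le_trans m3 hδ2
    have m5 : 2 * w ^ 2 ≤ ε ^ 2 := by nlinarith [m4, hcos2]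
    have m6 : w ^ 2 < ε ^ 2 := by linarith [m5, sq_nonneg w, pow_pos hε 2]
    exact lt_of_pow_lt_pow_left₀ 2 hε.le m6
  -- main argument: every point of X is within R of x'
  have key : ∀ y : X, dist x' y ≤ R := by
    intro y
    by_contra hcon
    push_neg at hcon
    set θ : ℝ := dist x' y with hθdef
    set b : ℝ := dist x (p fun _ => y) with hbdef
    have hbR : b ≤ R := hble y
    have hb0 : 0 ≤ b := dist_nonneg
    have hθab : θ ≤ a + b := by
      have h3 := dist_triangle (p fun _ => x') x (p fun _ => y)
      rw [hiso, dist_comm (p fun _ => x') x, ← hadef, ← hbdef, ← hθdef] at h3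
      exact h3
    have hθπ : θ < Real.pi := by linarith
    have hθ0 : 0 < θ := lt_trans hR0 hcon
    set F : Y → Y := fun w =>
      if h : dist (p fun _ => x') w < Real.pi then
        Classical.choose (hYmid (p fun _ => x') w h) else w
      with hFdef
    set m : ℕ → Y := fun j => F^[j] (p fun _ => y) with hmdef
    have hm0 : m 0 = (p fun _ => y) := rfl
    have hmsucc : ∀ j, m (j + 1) = F (m j) := fun j => Function.iterate_succ_apply' F j _
    have h2pow : ∀ n : ℕ, (1:ℝ) ≤ 2 ^ n := fun n => one_le_pow₀ one_le_two
    have h2pow' : ∀ n : ℕ, (2:ℝ) ≤ 2 ^ (n + 1) := by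
      intro n
      calc (2:ℝ) = 2 ^ 1 := (pow_one 2).symm
        _ ≤ 2 ^ (n + 1) := by
          apply pow_le_pow_right₀ one_le_two
          omega
    have hdivθ : ∀ n : ℕ, θ / 2 ^ n ≤ θ := fun n => div_le_self hθ0.le (h2pow n)
    have hdivθ' : ∀ n : ℕ, θ / 2 ^ (n + 1) ≤ θ / 2 := fun n =>
      div_le_div_of_nonneg_left hθ0.le two_pos (h2pow' n)
    -- the invariant
    have hinv : ∀ j, m j ∈ closure S ∧ dist (p fun _ => x') (m j) = θ / 2 ^ j ∧
        dist x (m j) ≤ Real.pi / 2 := by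
      intro j
      induction j with
      | zero =>
        refine ⟨subset_closure ⟨y, rfl⟩, ?_, ?_⟩
        · rw [hm0, pow_zero, div_one, hiso, ← hθdef]
        · rw [hm0, ← hbdef]; linarith
      | succ j ih =>
        obtain ⟨hCj, hdj, hxj⟩ := ih
        have hdlt : dist (p fun _ => x') (m j) < Real.pi := by
          rw [hdj]; linarith [hdivθ j]
        have hFj : m (j + 1) = Classical.choose (hYmid (p fun _ => x') (m j) hdlt) := by
          rw [hmsucc j, hFdef]
          simp only []
          rw [dif_pos hdlt]
        have hspec := Classical.choose_spec (hYmid (p fun _ => x') (m j) hdlt)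
        rw [← hFj] at hspec
        obtain ⟨hs1, hs2⟩ := hspec
        have hd1 : dist (p fun _ => x') (m (j + 1)) = θ / 2 ^ (j + 1) := by
          rw [hs1, hdj, pow_succ]; ring
        have hperim : dist (p fun _ => x') x + dist (m j) x +
            dist (p fun _ => x') (m j) < 2 * Real.pi := by
          rw [hdj, dist_comm (p fun _ => x') x, ← hadef, dist_comm (m j) x]
          linarith [hdivθ j]
        have hcmp := hYcmp (p fun _ => x') (m j) x (m (j + 1)) hdlt hs1 hs2 hperim
        rw [dist_comm (p fun _ => x') x, ← hadef, dist_comm (m j) x, hdj] at hcmp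
        have hhalf : θ / 2 ^ j / 2 = θ / 2 ^ (j + 1) := by rw [pow_succ]; ring
        rw [hhalf] at hcmp
        have hcosb2 : 0 ≤ Real.cos (dist x (m j)) :=
          Real.cos_nonneg_of_mem_Icc ⟨by linarith [dist_nonneg (x := x) (y := m j)], hxj⟩
        have hcosθ2 : 0 < Real.cos (θ / 2 ^ (j + 1)) := by
          apply Real.cos_pos_of_mem_Ioo
          constructor
          · have hp1 : 0 < θ / 2 ^ (j + 1) := by positivity
            linarith
          · linarith [hdivθ' j]
        have hcosnext : 0 < Real.cos (dist x (m (j + 1))) := by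
          by_contra hneg
          push_neg at hneg
          have hp2 : Real.cos (dist x (m (j + 1))) * Real.cos (θ / 2 ^ (j + 1)) ≤ 0 :=
            mul_nonpos_of_nonpos_of_nonneg hneg hcosθ2.le
          linarith
        refine ⟨hmidC _ _ _ (subset_closure ⟨x', rfl⟩) hCj hdlt hs1 hs2, hd1, ?_⟩
        by_contra hgt
        push_neg at hgt
        have hub : dist x (m (j + 1)) < Real.pi + Real.pi / 2 := by
          have h4 := dist_triangle x (p fun _ => x') (m (j + 1))
          rw [← hadef, hd1] at h4
          linarith [hdivθ (j + 1)]
        exact absurd (Real.cos_neg_of_pi_div_two_lt_of_lt hgt hub) (by linarith)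
    -- the comparison inequality along the iteration
    have hcomp : ∀ j, (Real.cos a + Real.cos (dist x (m j))) / 2 ≤
        Real.cos (dist x (m (j + 1))) * Real.cos (θ / 2 ^ (j + 1)) := by
      intro j
      obtain ⟨hCj, hdj, hxj⟩ := hinv j
      have hdlt : dist (p fun _ => x') (m j) < Real.pi := by
        rw [hdj]; linarith [hdivθ j]
      have hFj : m (j + 1) = Classical.choose (hYmid (p fun _ => x') (m j) hdlt) := by
        rw [hmsucc j, hFdef]
        simp only []
        rw [dif_pos hdlt]
      have hspec := Classical.choose_spec (hYmid (p fun _ => x') (m j) hdlt)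
      rw [← hFj] at hspec
      obtain ⟨hs1, hs2⟩ := hspec
      have hperim : dist (p fun _ => x') x + dist (m j) x +
          dist (p fun _ => x') (m j) < 2 * Real.pi := by
        rw [hdj, dist_comm (p fun _ => x') x, ← hadef, dist_comm (m j) x]
        linarith [hdivθ j]
      have hcmp := hYcmp (p fun _ => x') (m j) x (m (j + 1)) hdlt hs1 hs2 hperim
      rw [dist_comm (p fun _ => x') x, ← hadef, dist_comm (m j) x, hdj] at hcmp
      have hhalf : θ / 2 ^ j / 2 = θ / 2 ^ (j + 1) := by rw [pow_succ]; ring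
      rw [hhalf] at hcmp
      exact hcmp
    -- the downward unrolling
    have hdown : ∀ k j : ℕ, j ≤ k →
        Real.cos (dist x (m (k - j))) * Real.sin (θ / 2 ^ k) ≤
        Real.cos a * (Real.sin ((2:ℝ) ^ j * (θ / 2 ^ k)) -
          Real.sin (((2:ℝ) ^ j - 1) * (θ / 2 ^ k))) := by
      intro k j
      induction j with
      | zero =>
        intro _
        have hsin0 : 0 ≤ Real.sin (θ / 2 ^ k) :=
          Real.sin_nonneg_of_nonneg_of_le_pi (by positivity) (by linarith [hdivθ k])
        have hklem : Real.cos (dist x (m k)) ≤ Real.cos a := by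
          obtain ⟨hCk, -, hxk⟩ := hinv k
          exact Real.cos_le_cos_of_nonneg_of_le_pi ha0 (by linarith) (hCdist _ hCk)
        rw [Nat.sub_zero, pow_zero, one_mul, show ((1:ℝ) - 1) = 0 by ring, zero_mul,
          Real.sin_zero, sub_zero]
        exact mul_le_mul_of_nonneg_right hklem hsin0
      | succ j ih =>
        intro hjk
        have hj : j ≤ k := by omega
        have IH := ih hj
        set t : ℝ := θ / 2 ^ k with htdef
        have hsin0 : 0 ≤ Real.sin t := by
          rw [htdef]
          exact Real.sin_nonneg_of_nonneg_of_le_pi (by positivity) (by linarith [hdivθ k])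
        have h2k : (2:ℝ) ^ k = 2 ^ (k - j) * 2 ^ j := by
          rw [← pow_add]; congr 1; omega
        have hA : (2:ℝ) ^ j * t = θ / 2 ^ (k - j) := by
          rw [htdef, h2k]
          field_simp
        have hidx : k - (j + 1) + 1 = k - j := by omega
        have hc := hcomp (k - (j + 1))
        rw [hidx, ← hA] at hc
        have hcosA0 : 0 ≤ Real.cos ((2:ℝ) ^ j * t) := by
          rw [hA]
          apply Real.cos_nonneg_of_mem_Icc
          constructor
          · have hp1 : 0 ≤ θ / 2 ^ (k - j) := by positivity
            linarith
          · have hkj : ∃ n, k - j = n + 1 := ⟨k - j - 1, by omega⟩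
            obtain ⟨n, hn⟩ := hkj
            rw [hn]
            linarith [hdivθ' n]
        have hrearr : Real.cos (dist x (m (k - (j + 1)))) ≤
            2 * Real.cos ((2:ℝ) ^ j * t) * Real.cos (dist x (m (k - j))) - Real.cos a := by
          linarith
        have step1 : Real.cos (dist x (m (k - (j + 1)))) * Real.sin t ≤
            (2 * Real.cos ((2:ℝ) ^ j * t) * Real.cos (dist x (m (k - j))) - Real.cos a) *
              Real.sin t :=
          mul_le_mul_of_nonneg_right hrearr hsin0
        have step2 : 2 * Real.cos ((2:ℝ) ^ j * t) *
              (Real.cos (dist x (m (k - j))) * Real.sin t) ≤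
            2 * Real.cos ((2:ℝ) ^ j * t) *
              (Real.cos a * (Real.sin ((2:ℝ) ^ j * t) - Real.sin (((2:ℝ) ^ j - 1) * t))) :=
          mul_le_mul_of_nonneg_left IH (by linarith)
        have hident : 2 * Real.cos ((2:ℝ) ^ j * t) *
              (Real.cos a * (Real.sin ((2:ℝ) ^ j * t) - Real.sin (((2:ℝ) ^ j - 1) * t))) -
              Real.cos a * Real.sin t
            = Real.cos a * (Real.sin ((2:ℝ) ^ (j + 1) * t) -
              Real.sin (((2:ℝ) ^ (j + 1) - 1) * t)) := by
          have e1 : (2:ℝ) ^ (j + 1) * t = ((2:ℝ) ^ j * t) + ((2:ℝ) ^ j * t) := by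
            rw [pow_succ]; ring
          have e2 : ((2:ℝ) ^ (j + 1) - 1) * t = ((2:ℝ) ^ j * t) + (((2:ℝ) ^ j - 1) * t) := by
            rw [pow_succ]; ring
          have e3 : Real.sin t =
              Real.sin ((2:ℝ) ^ j * t) * Real.cos (((2:ℝ) ^ j - 1) * t) -
              Real.cos ((2:ℝ) ^ j * t) * Real.sin (((2:ℝ) ^ j - 1) * t) := by
            have e4 := Real.sin_sub ((2:ℝ) ^ j * t) (((2:ℝ) ^ j - 1) * t)
            rw [show (2:ℝ) ^ j * t - ((2:ℝ) ^ j - 1) * t = t from by ring] at e4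
            exact e4
          rw [e1, e2, Real.sin_add, Real.sin_add, e3]
          ring
        calc Real.cos (dist x (m (k - (j + 1)))) * Real.sin t
            ≤ (2 * Real.cos ((2:ℝ) ^ j * t) * Real.cos (dist x (m (k - j))) - Real.cos a) *
              Real.sin t := step1
          _ = 2 * Real.cos ((2:ℝ) ^ j * t) * (Real.cos (dist x (m (k - j))) * Real.sin t) -
              Real.cos a * Real.sin t := by ring
          _ ≤ 2 * Real.cos ((2:ℝ) ^ j * t) *
              (Real.cos a * (Real.sin ((2:ℝ) ^ j * t) - Real.sin (((2:ℝ) ^ j - 1) * t))) -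
              Real.cos a * Real.sin t := by linarith
          _ = Real.cos a * (Real.sin ((2:ℝ) ^ (j + 1) * t) -
              Real.sin (((2:ℝ) ^ (j + 1) - 1) * t)) := hident
    -- conclude
    have hcosθR : Real.cos θ < Real.cos R :=
      Real.strictAntiOn_cos ⟨hR0.le, by linarith⟩ ⟨by linarith, hθπ.le⟩ hcon
    have hcosRb : Real.cos R ≤ Real.cos b :=
      Real.cos_le_cos_of_nonneg_of_le_pi hb0 (by linarith) hbR
    have hcosR0 : 0 ≤ Real.cos R := Real.cos_nonneg_of_mem_Icc ⟨by linarith, hRpi⟩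
    have hcosa1 : Real.cos a ≤ 1 := Real.cos_le_one a
    set Q : ℝ := Real.cos b - Real.cos a * Real.cos θ with hQdef
    have hQpos : 0 < Q := by
      rcases le_or_gt 0 (Real.cos θ) with hcc | hcc
      · have h5 : Real.cos a * Real.cos θ ≤ Real.cos θ := mul_le_of_le_one_left hcc hcosa1
        rw [hQdef]; linarith
      · have h5 : Real.cos a * Real.cos θ < 0 := mul_neg_of_pos_of_neg hcosa hcc
        rw [hQdef]; linarith
    have hM0 : 0 < min (4 * Q / Real.pi) (Real.pi / 2) := lt_min (by positivity) (by positivity)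
    obtain ⟨k, hk⟩ := exists_pow_lt_of_lt_one
      (div_pos hM0 hθ0) (by norm_num : (1:ℝ) / 2 < 1)
    set t : ℝ := θ / 2 ^ k with htdef
    have htlt : t < min (4 * Q / Real.pi) (Real.pi / 2) := by
      have h6 : θ * ((1:ℝ) / 2) ^ k < θ * (min (4 * Q / Real.pi) (Real.pi / 2) / θ) :=
        mul_lt_mul_of_pos_left hk hθ0
      rw [mul_div_cancel₀ _ (ne_of_gt hθ0)] at h6
      calc t = θ * ((1:ℝ) / 2) ^ k := by
            rw [htdef, one_div, inv_pow, div_eq_mul_inv]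
        _ < _ := h6
    have ht0 : 0 < t := by rw [htdef]; positivity
    have htπ2 : t ≤ Real.pi / 2 := le_of_lt (lt_of_lt_of_le htlt (min_le_right _ _))
    have htQ : t < 4 * Q / Real.pi := lt_of_lt_of_le htlt (min_le_left _ _)
    have hmm := hdown k k le_rfl
    rw [Nat.sub_self, hm0, ← hbdef, ← htdef] at hmm
    have h2kt : (2:ℝ) ^ k * t = θ := by
      rw [htdef]; field_simp
    have h2kt1 : ((2:ℝ) ^ k - 1) * t = θ - t := by rw [sub_mul, h2kt, one_mul]
    rw [h2kt, h2kt1, Real.sin_sub] at hmm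
    have hsθ : 0 ≤ Real.sin θ := Real.sin_nonneg_of_nonneg_of_le_pi (by linarith) hθπ.le
    have hsθ1 : Real.sin θ ≤ 1 := Real.sin_le_one θ
    have hct1 : Real.cos t ≤ 1 := Real.cos_le_one t
    have hcs : Real.cos a * Real.sin θ ≤ 1 := mul_le_one₀ hcosa1 hsθ hsθ1
    have hcs0 : 0 ≤ Real.cos a * Real.sin θ := mul_nonneg hcosa.le hsθ
    have hQsin : Q * Real.sin t ≤ 1 - Real.cos t := by
      have h8 : Real.cos a * Real.sin θ * (1 - Real.cos t) ≤ 1 * (1 - Real.cos t) :=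
        mul_le_mul_of_nonneg_right hcs (by linarith)
      rw [hQdef]
      nlinarith [hmm, h8]
    have hj : 2 / Real.pi * t ≤ Real.sin t := Real.mul_le_sin ht0.le htπ2
    have hq2 : 1 - t ^ 2 / 2 ≤ Real.cos t := Real.one_sub_sq_div_two_le_cos
    have hQt : Q * (2 / Real.pi * t) ≤ t ^ 2 / 2 := by
      have h0 : Q * (2 / Real.pi * t) ≤ Q * Real.sin t :=
        mul_le_mul_of_nonneg_left hj hQpos.le
      have h0' : Q * Real.sin t ≤ 1 - Real.cos t := hQsin
      calc Q * (2 / Real.pi * t) ≤ Q * Real.sin t := h0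
        _ ≤ 1 - Real.cos t := h0'
        _ ≤ t ^ 2 / 2 := by linarith [hq2]
    have hfinal : Real.pi * t < 4 * Q := by
      rw [lt_div_iff₀ hπ] at htQ
      linarith
    have h9 : Real.pi * t * t < 4 * Q * t := mul_lt_mul_of_pos_right hfinal ht0
    have h10 : 2 * Real.pi * (Q * (2 / Real.pi * t)) ≤ 2 * Real.pi * (t ^ 2 / 2) :=
      mul_le_mul_of_nonneg_left hQt (by positivity)
    have e10 : 2 * Real.pi * (Q * (2 / Real.pi * t)) = 4 * Q * t := by
      field_simp
      ring
    rw [e10] at h10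
    nlinarith [h9, h10]
  -- wrap up
  rw [show eRad X = ENNReal.ofReal R from (ENNReal.ofReal_toReal hfin).symm]
  refine iSup_le fun y => ?_
  rw [edist_dist]
  exact ENNReal.ofReal_le_ofReal (key y)
end
end

section
/- Every complete CAT(1) space X of radius rad(X) < π/2 has a unique circumcenter, and this circumcenter is fixed by every isometry of X. -/
open scoped ENNReal RealInnerProductSpace
open Set Filter

noncomputable section

lemma cos_le_cos_add_abs (a b : ℝ) : Real.cos a ≤ Real.cos b + |a - b| := by
  have h := Real.cos_sub_cos a b
  have h1 : |Real.sin ((a + b) / 2)| ≤ 1 := Real.abs_sin_le_one _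
  have h2 : |Real.sin ((a - b) / 2)| ≤ |(a - b) / 2| := Real.abs_sin_le_abs
  have h3 : Real.cos a - Real.cos b ≤ |a - b| := by
    rw [h]
    calc -2 * Real.sin ((a + b) / 2) * Real.sin ((a - b) / 2)
        ≤ |(-2) * Real.sin ((a + b) / 2) * Real.sin ((a - b) / 2)| := le_abs_self _
      _ = 2 * |Real.sin ((a + b) / 2)| * |Real.sin ((a - b) / 2)| := by
          rw [abs_mul, abs_mul]; norm_num
      _ ≤ 2 * 1 * |(a - b) / 2| := by
          apply mul_le_mul _ h2 (abs_nonneg _) (by norm_num)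
          nlinarith [abs_nonneg (Real.sin ((a+b)/2))]
      _ = |a - b| := by rw [abs_div, abs_two]; ring
  linarith

/-- (Lang–Schroeder) A complete CAT(1) space of radius `< π/2`
has a unique circumcenter, which is fixed by every isometry. -/
theorem statement17 (X : Type*) [MetricSpace X] (hX : IsCAT1 X)
    (hrad : eRad X < ENNReal.ofReal (Real.pi / 2)) :
    ∃ c : X, (⨆ z : X, edist c z) = eRad X ∧
      (∀ c' : X, (⨆ z : X, edist c' z) = eRad X → c' = c) ∧
      ∀ f : X ≃ᵢ X, f c = c := by
  obtain ⟨hcomp, hmid, hineq⟩ := hX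
  haveI := hcomp
  have hπ : (0:ℝ) < Real.pi := Real.pi_pos
  have hne : Nonempty X := by
    by_contra h
    rw [not_nonempty_iff] at h
    rw [eRad, iInf_of_empty] at hrad
    exact not_top_lt hrad
  have hrtop : eRad X ≠ ⊤ := hrad.ne_top
  set r : ℝ := (eRad X).toReal with hrdef
  have hofr : ENNReal.ofReal r = eRad X := ENNReal.ofReal_toReal hrtop
  have hr0 : (0:ℝ) ≤ r := ENNReal.toReal_nonneg
  have hrlt : r < Real.pi / 2 := by
    rw [← hofr] at hrad
    exact (ENNReal.ofReal_lt_ofReal_iff (by positivity)).mp hrad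
  have hcosr : 0 < Real.cos r := Real.cos_pos_of_mem_Ioo ⟨by linarith, hrlt⟩
  have hSge : ∀ x : X, eRad X ≤ ⨆ z : X, edist x z := fun x => iInf_le _ x
  have hdistle : ∀ (x z : X) (b : ℝ), 0 ≤ b →
      (⨆ w : X, edist x w) ≤ ENNReal.ofReal b → dist x z ≤ b := by
    intro x z b hb h
    have h2 : edist x z ≤ ENNReal.ofReal b := le_trans (le_iSup (fun w => edist x w) z) h
    rwa [edist_dist, ENNReal.ofReal_le_ofReal_iff hb] at h2
  -- Key comparison estimate
  have hkey : ∀ b : ℝ, 0 ≤ b → b < Real.pi / 2 → ∀ x y : X,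
      (⨆ z : X, edist x z) ≤ ENNReal.ofReal b →
      (⨆ z : X, edist y z) ≤ ENNReal.ofReal b →
      Real.cos b ≤ Real.cos r * Real.cos (dist x y / 2) := by
    intro b hb0 hbπ x y hx hy
    have hd : dist x y ≤ b := hdistle x y b hb0 hx
    have hd0 : (0:ℝ) ≤ dist x y := dist_nonneg
    have hdπ : dist x y < Real.pi := by linarith
    obtain ⟨m, hm1, hm2⟩ := hmid x y hdπ
    have hcoshalf : 0 ≤ Real.cos (dist x y / 2) :=
      Real.cos_nonneg_of_mem_Icc ⟨by linarith, by linarith⟩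
    have core : ∀ t : ℝ, 0 ≤ t → t < r →
        Real.cos b ≤ Real.cos t * Real.cos (dist x y / 2) := by
      intro t ht0 htr
      have h1 : ENNReal.ofReal t < ⨆ z : X, edist m z := by
        refine lt_of_lt_of_le ?_ (hSge m)
        rw [← hofr]
        exact (ENNReal.ofReal_lt_ofReal_iff_of_nonneg ht0).mpr htr
      obtain ⟨z, hz⟩ := lt_iSup_iff.mp h1
      have htz : t < dist m z := by
        rwa [edist_dist, ENNReal.ofReal_lt_ofReal_iff_of_nonneg ht0] at hz
      have hxz : dist x z ≤ b := hdistle x z b hb0 hx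
      have hyz : dist y z ≤ b := hdistle y z b hb0 hy
      have hmx : dist m x = dist x y / 2 := by rw [dist_comm]; exact hm1
      have hzm : dist z m ≤ Real.pi := by
        have := dist_triangle m x z
        have : dist m z ≤ dist x y / 2 + b := by rw [hmx] at this; linarith [this]
        rw [dist_comm]; linarith
      have hper : dist x z + dist y z + dist x y < 2 * Real.pi := by linarith
      have hc := hineq x y z m hdπ hm1 hm2 hper
      have h2 : Real.cos b ≤ Real.cos (dist x z) :=
        Real.cos_le_cos_of_nonneg_of_le_pi dist_nonneg (by linarith) hxz
      have h3 : Real.cos b ≤ Real.cos (dist y z) :=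
        Real.cos_le_cos_of_nonneg_of_le_pi dist_nonneg (by linarith) hyz
      have h4 : Real.cos (dist z m) ≤ Real.cos t := by
        apply Real.cos_le_cos_of_nonneg_of_le_pi ht0 hzm
        rw [dist_comm]; exact htz.le
      have h5 : Real.cos (dist z m) * Real.cos (dist x y / 2) ≤
          Real.cos t * Real.cos (dist x y / 2) :=
        mul_le_mul_of_nonneg_right h4 hcoshalf
      linarith
    rcases eq_or_lt_of_le hr0 with hre | hrpos
    · have h6 : Real.cos b ≤ Real.cos (dist x y / 2) :=
        Real.cos_le_cos_of_nonneg_of_le_pi (by linarith) (by linarith) (by linarith)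
      rw [← hre, Real.cos_zero, one_mul]
      exact h6
    · by_contra hcon
      push_neg at hcon
      set η := Real.cos b - Real.cos r * Real.cos (dist x y / 2) with hη
      have hη0 : 0 < η := by simp only [hη]; linarith
      set t := max 0 (r - η / 2) with ht
      have h7 := core t (le_max_left _ _) (max_lt hrpos (by linarith))
      have h8 : Real.cos t ≤ Real.cos r + η / 2 := by
        have := cos_le_cos_add_abs t r
        have habs : |t - r| ≤ η / 2 := by
          rw [abs_le]
          constructor
          · have : r - η / 2 ≤ t := le_max_right _ _
            linarith
          · have : t ≤ r := max_le hrpos.le (by linarith)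
            linarith
        linarith
      have h9 : Real.cos (dist x y / 2) ≤ 1 := Real.cos_le_one _
      nlinarith
  -- diameter control of almost-minimizers
  have hdiam : ∀ δ : ℝ, 0 < δ → ∃ ε : ℝ, 0 < ε ∧ ∀ x y : X,
      (⨆ z : X, edist x z) ≤ ENNReal.ofReal (r + ε) →
      (⨆ z : X, edist y z) ≤ ENNReal.ofReal (r + ε) → dist x y < δ := by
    intro δ hδ
    set δ' := min δ Real.pi with hδ'def
    have hδ'0 : 0 < δ' := lt_min hδ hπ
    have hδ'π : δ' ≤ Real.pi := min_le_right _ _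
    have hc1 : Real.cos (δ' / 2) < 1 := by
      rcases lt_or_eq_of_le (Real.cos_le_one (δ' / 2)) with h | h
      · exact h
      · exfalso
        have := (Real.cos_eq_one_iff_of_lt_of_lt (by linarith) (by linarith)).mp h
        linarith
    set ε := min ((Real.pi / 2 - r) / 2) (Real.cos r * (1 - Real.cos (δ' / 2)) / 2) with hε
    have hε0 : 0 < ε := lt_min (by linarith) (by nlinarith)
    refine ⟨ε, hε0, fun x y hx hy => ?_⟩
    have hεle1 : ε ≤ (Real.pi / 2 - r) / 2 := min_le_left _ _
    have hεle2 : ε ≤ Real.cos r * (1 - Real.cos (δ' / 2)) / 2 := min_le_right _ _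
    have hb : r + ε < Real.pi / 2 := by linarith
    have hk := hkey (r + ε) (by linarith) hb x y hx hy
    have hlip : Real.cos r ≤ Real.cos (r + ε) + ε := by
      have := cos_le_cos_add_abs r (r + ε)
      have : |r - (r + ε)| = ε := by rw [show r - (r + ε) = -ε by ring, abs_neg, abs_of_pos hε0]
      linarith [cos_le_cos_add_abs r (r + ε), this]
    have h5 : Real.cos r * Real.cos (δ' / 2) < Real.cos r * Real.cos (dist x y / 2) := by
      nlinarith
    have h6 : Real.cos (δ' / 2) < Real.cos (dist x y / 2) :=
      (mul_lt_mul_iff_right₀ hcosr).mp h5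
    by_contra hcon
    push_neg at hcon
    have hd : dist x y ≤ r + ε := hdistle x y (r + ε) (by linarith) hx
    have h7 : Real.cos (dist x y / 2) ≤ Real.cos (δ' / 2) := by
      apply Real.cos_le_cos_of_nonneg_of_le_pi (by linarith) (by linarith)
      have : δ' ≤ dist x y := le_trans (min_le_left _ _) hcon
      linarith
    linarith
  -- minimizing sequence
  have hx_ex : ∀ n : ℕ, ∃ x : X,
      (⨆ z : X, edist x z) ≤ ENNReal.ofReal (r + 1 / (n + 1)) := by
    intro n
    have hpos : (0:ℝ) < 1 / (n + 1 : ℝ) := by positivity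
    have h1 : eRad X < ENNReal.ofReal (r + 1 / (n + 1)) := by
      rw [← hofr]
      exact (ENNReal.ofReal_lt_ofReal_iff (by linarith)).mpr (by linarith)
    obtain ⟨x, hx⟩ := iInf_lt_iff.mp h1
    exact ⟨x, hx.le⟩
  choose u hu using hx_ex
  have hcauchy : CauchySeq u := by
    rw [Metric.cauchySeq_iff]
    intro δ hδ
    obtain ⟨ε, hε, hdi⟩ := hdiam δ hδ
    obtain ⟨N, hN⟩ := exists_nat_gt (1 / ε)
    have key : ∀ p : ℕ, N ≤ p → (⨆ z : X, edist (u p) z) ≤ ENNReal.ofReal (r + ε) := by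
      intro p hp
      refine le_trans (hu p) (ENNReal.ofReal_le_ofReal ?_)
      have hp1 : (1:ℝ) / ε < p + 1 := by
        calc (1:ℝ) / ε < N := hN
          _ ≤ p := by exact_mod_cast hp
          _ < p + 1 := by linarith
      have : (1:ℝ) / (p + 1) < ε := by
        rw [div_lt_iff₀ (by positivity)]
        rw [div_lt_iff₀ hε] at hp1
        linarith
      linarith
    exact ⟨N, fun p hp q hq => hdi _ _ (key p hp) (key q hq)⟩
  obtain ⟨c, hc⟩ := cauchySeq_tendsto_of_complete hcauchy
  have hSc : (⨆ z : X, edist c z) = eRad X := by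
    refine le_antisymm ?_ (hSge c)
    refine iSup_le fun z => ?_
    rw [edist_dist, ← hofr]
    refine ENNReal.ofReal_le_ofReal ?_
    have hle : ∀ n : ℕ, dist c z ≤ dist c (u n) + (r + 1 / (n + 1)) := by
      intro n
      have h1 : dist (u n) z ≤ r + 1 / (n + 1) := hdistle _ _ _ (by positivity) (hu n)
      calc dist c z ≤ dist c (u n) + dist (u n) z := dist_triangle _ _ _
        _ ≤ dist c (u n) + (r + 1 / (n + 1)) := by linarith
    have ht1 : Tendsto (fun n : ℕ => dist c (u n)) atTop (nhds 0) := by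
      have := tendsto_iff_dist_tendsto_zero.mp hc
      simpa [dist_comm] using this
    have ht2 : Tendsto (fun n : ℕ => (1:ℝ) / (n + 1)) atTop (nhds 0) :=
      tendsto_one_div_add_atTop_nhds_zero_nat
    have htend : Tendsto (fun n : ℕ => dist c (u n) + (r + 1 / (n + 1)))
        atTop (nhds (0 + (r + 0))) :=
      ht1.add (tendsto_const_nhds.add ht2)
    have := ge_of_tendsto htend (Filter.Eventually.of_forall hle)
    linarith
  have huniq : ∀ c' : X, (⨆ z : X, edist c' z) = eRad X → c' = c := by
    intro c' hc'
    have hk := hkey r hr0 hrlt c' c (by rw [hc', hofr]) (by rw [hSc, hofr])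
    have hdle : dist c' c ≤ r := hdistle c' c r hr0 (by rw [hc', hofr])
    have h1 : 1 ≤ Real.cos (dist c' c / 2) := by nlinarith [Real.cos_le_one (dist c' c / 2)]
    have h2 : Real.cos (dist c' c / 2) = 1 := le_antisymm (Real.cos_le_one _) h1
    have hd0 : (0:ℝ) ≤ dist c' c := dist_nonneg
    have h3 : dist c' c / 2 = 0 := by
      refine (Real.cos_eq_one_iff_of_lt_of_lt ?_ ?_).mp h2
      · linarith
      · linarith
    exact dist_eq_zero.mp (by linarith)
  refine ⟨c, hSc, huniq, fun f => huniq (f c) ?_⟩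
  have hfix : (⨆ z : X, edist (f c) z) = ⨆ z : X, edist c z := by
    refine le_antisymm (iSup_le fun z => ?_) (iSup_le fun z => ?_)
    · have h1 : edist (f c) z = edist c (f.symm z) := by
        conv_lhs => rw [← f.apply_symm_apply z]
        exact f.isometry.edist_eq c (f.symm z)
      rw [h1]
      exact le_iSup (fun w => edist c w) (f.symm z)
    · have h1 : edist c z = edist (f c) (f z) := (f.isometry.edist_eq c z).symm
      rw [h1]
      exact le_iSup (fun w => edist (f c) w) (f z)
  rw [hfix, hSc]
end
end
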